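/- arXiv:1504.01783 — 10 statements merged into one kernel-verified Lean document; each statement's English description precedes it below -/
import Mathlib

section
/- Suppose α* ∈ A satisfies h(α*) ≥ h(α) for all α ∈ A, suppose that for every α ∈ A the infimum h(α) is attained, suppose there is a relatively open neighborhood U of α* in A and a map x* : U → ℝ^d such that for each α ∈ U the point x*(α) minimizes f over {x ∈ ℝ^d : g(x, α) ≥ 0} and such that x* is differentiable at α* (within A), and suppose ∇ₓg(x*(α*), α*) ≠ 0. Then x*(α*) satisfies g(x*(α*), α) ≥ 0 for every α ∈ A, and f(x*(α*)) ≤ f(x) for every x ∈ ℝ^d satisfying g(x, α) ≥ 0 for all α ∈ A; that is, x*(α*) minimizes f subject to the semi-infinite family of constraints {g(·, α) ≥ 0 : α ∈ A}. -/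
/-!
Write `x₀ = x*(α*)`. If `∇f(x₀) = 0`, convexity makes `x₀` the unique global minimiser of `f`;
since `f(x*(α)) = h(α) ≤ h(α*) = f(x₀)`, every `x*(α)` is a global minimiser as well, so
`x*(α) = x₀` and `x₀` is feasible for `α`.

Otherwise the constraint is active at `(x₀, α*)` and first-order optimality gives
`∂ₓg · v > 0 → ∇f · v ≥ 0`, which is strict because `∇f ≠ 0` and `{∂ₓg · v > 0}` is open.
For `e = α - α*` and `v = x*'(α*) e`, the value `f(x*(·)) = h` is maximal at `α*` and
`g(x*(·), ·) ≥ 0` vanishes at `α*`, so `∇f · v ≤ 0`, whence `∂ₓg · v ≤ 0`, and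
`∂ₓg · v + ∂_αg · e ≥ 0`. Thus `∂_αg · e ≥ 0`, and convexity of `g(x₀, ·)` gives
`g(x₀, α) ≥ g(x₀, α*) + ∂_αg · e ≥ 0`.
-/

open Set Filter Topology

theorem ContinuousLinearMap.pos_of_nonneg_on_isOpen {E : Type*} [TopologicalSpace E]
    [AddCommGroup E] [Module ℝ E] [IsTopologicalAddGroup E] [ContinuousSMul ℝ E]
    {ℓ : E →L[ℝ] ℝ} (hℓ : ℓ ≠ 0) {S : Set E} (hS : IsOpen S) (hnonneg : ∀ w ∈ S, 0 ≤ ℓ w)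
    {v : E} (hv : v ∈ S) : 0 < ℓ v := by
  refine (hnonneg v hv).lt_of_ne' fun hv0 => ?_
  obtain ⟨u, hu⟩ : ∃ u, ℓ u ≠ 0 := by simpa [ContinuousLinearMap.ext_iff] using hℓ
  have hline : Continuous fun t : ℝ => v - t • ℓ u • u := by fun_prop
  obtain ⟨t, htS, ht⟩ := (((hline.tendsto' 0 v (by simp)).eventually (hS.mem_nhds hv)).filter_mono
    nhdsWithin_le_nhds |>.and (self_mem_nhdsWithin (s := Ioi (0 : ℝ)) (a := 0))).exists
  have hw := hnonneg _ htS
  simp only [map_sub, map_smul, hv0, smul_eq_mul] at hw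
  nlinarith [mul_pos (mem_Ioi.mp ht) (sq_pos_of_ne_zero hu)]

variable {E : Type*} [NormedAddCommGroup E] [NormedSpace ℝ E]

theorem ConvexOn.hasFDerivWithinAt_le_sub {s : Set E} {φ : E → ℝ} {φ' : E →L[ℝ] ℝ} {x y : E}
    (hφ : ConvexOn ℝ s φ) (hx : x ∈ s) (hy : y ∈ s) (hd : HasFDerivWithinAt φ φ' s x) :
    φ' (y - x) ≤ φ y - φ x := by
  set ℓ : ℝ → ℝ := fun t => φ (x + t • (y - x)) - t * (φ y - φ x)
  have hmaps : MapsTo (fun t : ℝ => x + t • (y - x)) (Icc 0 1) s := fun t ht =>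
    hφ.1.add_smul_sub_mem hx hy ht
  have hmax : IsMaxOn ℓ (Icc 0 1) 0 := fun t ⟨ht0, ht1⟩ => by
    have hchord := hφ.2 hx hy (sub_nonneg.mpr ht1) ht0 (sub_add_cancel 1 t)
    rw [← show x + t • (y - x) = (1 - t) • x + t • y by module] at hchord
    simp only [smul_eq_mul] at hchord
    change ℓ t ≤ ℓ 0
    simp only [ℓ, zero_smul, add_zero, zero_mul, sub_zero]
    linarith
  have hline : HasDerivWithinAt (fun t : ℝ => x + t • (y - x)) (y - x) (Icc 0 1) 0 := by
    simpa using (((hasDerivAt_id (0 : ℝ)).smul_const (y - x)).const_add x).hasDerivWithinAt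
  have hℓ : HasDerivWithinAt ℓ (φ' (y - x) - (φ y - φ x)) (Icc 0 1) 0 := by
    have hd' : HasFDerivWithinAt φ φ' s (x + (0 : ℝ) • (y - x)) := by simpa using hd
    exact (hd'.comp_hasDerivWithinAt 0 hline hmaps).sub
      (hasDerivAt_mul_const (φ y - φ x)).hasDerivWithinAt
  have hone : (1 : ℝ) ∈ posTangentConeAt (Icc 0 1) 0 :=
    mem_posTangentConeAt_of_segment_subset (by rw [zero_add, segment_eq_Icc zero_le_one])
  have hderiv := hmax.localize.hasFDerivWithinAt_nonpos hℓ.hasFDerivWithinAt hone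
  rw [ContinuousLinearMap.toSpanSingleton_apply, one_smul] at hderiv
  linarith

theorem mem_posTangentConeAt_setOf_nonneg {φ : E → ℝ} {φ' : E →L[ℝ] ℝ} {x w : E}
    (hφ : HasFDerivAt φ φ' x) (hx : φ x = 0) (hw : 0 < φ' w) :
    w ∈ posTangentConeAt {y | 0 ≤ φ y} x := by
  have hθ : HasDerivAt (fun t : ℝ => φ (x + t • w)) (φ' w) 0 := by
    have hφ' : HasFDerivAt φ φ' (x + (0 : ℝ) • w) := by simpa using hφ
    exact hφ'.comp_hasDerivAt 0 (by simpa using ((hasDerivAt_id (0 : ℝ)).smul_const w).const_add x)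
  refine mem_posTangentConeAt_of_frequently_mem (Eventually.frequently ?_)
  filter_upwards [hθ.tendsto_slope_zero_right.eventually (eventually_gt_nhds hw),
    self_mem_nhdsWithin] with t hslope (ht : 0 < t)
  simp only [zero_add, zero_smul, add_zero, hx, sub_zero, smul_eq_mul] at hslope
  exact (pos_of_mul_pos_right hslope (inv_nonneg.mpr ht.le)).le

theorem IsMinOn.eq_zero_of_fderiv_ne_zero {f φ : E → ℝ} {x : E}
    (hmin : IsMinOn f {y | 0 ≤ φ y} x) (hx : 0 ≤ φ x) (hφ : ContinuousAt φ x)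
    (hf : fderiv ℝ f x ≠ 0) : φ x = 0 := by
  refine (hx.eq_or_lt.resolve_right fun hpos => hf ?_).symm
  have hnhds : {y | 0 ≤ φ y} ∈ 𝓝 x := hφ.eventually (lt_mem_nhds hpos) |>.mono fun _ => le_of_lt
  exact (hmin.isLocalMin hnhds).fderiv_eq_zero

theorem IsMinOn.pos_of_hasFDerivAt_of_pos {f φ : E → ℝ} {f' φ' : E →L[ℝ] ℝ} {x v : E}
    (hmin : IsMinOn f {y | 0 ≤ φ y} x) (hx : φ x = 0) (hf : HasFDerivAt f f' x)
    (hφ : HasFDerivAt φ φ' x) (hf' : f' ≠ 0) (hv : 0 < φ' v) : 0 < f' v :=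
  f'.pos_of_nonneg_on_isOpen hf' (isOpen_lt continuous_const φ'.continuous)
    (fun _ hw => hmin.localize.hasFDerivWithinAt_nonneg hf.hasFDerivWithinAt
      (mem_posTangentConeAt_setOf_nonneg hφ hx hw)) hv

theorem apply_nonneg_of_isLocalMaxOn_comp {A : Set ℝ} (hA : Convex ℝ A) {a b : ℝ}
    (ha : a ∈ A) (hb : b ∈ A) {x : ℝ → E} {L : ℝ →L[ℝ] E} (hx : HasFDerivWithinAt x L A a)
    {f : E → ℝ} {F : E →L[ℝ] ℝ} (hf : HasFDerivAt f F (x a)) (hmax : IsLocalMaxOn (f ∘ x) A a)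
    {g : E × ℝ → ℝ} {G : E × ℝ →L[ℝ] ℝ} (hg : HasFDerivAt g G (x a, a))
    (hmin : IsLocalMinOn (fun β => g (x β, β)) A a) (hFG : ∀ v, 0 < G (v, 0) → 0 < F v)
    (hconv : ConvexOn ℝ A fun β => g (x a, β)) (hzero : g (x a, a) = 0) : 0 ≤ g (x a, b) := by
  have he : b - a ∈ posTangentConeAt A a :=
    sub_mem_posTangentConeAt_of_segment_subset (hA.segment_subset ha hb)
  have hFv : F (L (b - a)) ≤ 0 :=
    hmax.hasFDerivWithinAt_nonpos (hf.comp_hasFDerivWithinAt a hx) he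
  have hψ : HasFDerivWithinAt (fun β => g (x β, β)) (G.comp (L.prod (.id ℝ ℝ))) A a :=
    HasFDerivAt.comp_hasFDerivWithinAt (f := fun β => (x β, β)) a hg
      (hx.prodMk (hasFDerivWithinAt_id a A))
  have hGv : 0 ≤ G (L (b - a), b - a) := hmin.hasFDerivWithinAt_nonneg hψ he
  have hGx : G (L (b - a), 0) ≤ 0 := not_lt.1 fun hpos => (hFG _ hpos).not_ge hFv
  have hGα : HasFDerivAt (fun β => g (x a, β)) (G.comp (.inr ℝ E ℝ)) a :=
    hg.comp a (hasFDerivAt_prodMk_right (x a) a)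
  have hsplit : G (L (b - a), 0) + G (0, b - a) = G (L (b - a), b - a) := by
    rw [← map_add, Prod.mk_add_mk, add_zero, zero_add]
  calc 0 ≤ G (0, b - a) := by linarith
    _ ≤ g (x a, b) - g (x a, a) := hconv.hasFDerivWithinAt_le_sub ha hb hGα.hasFDerivWithinAt
    _ = g (x a, b) := by rw [hzero, sub_zero]

theorem stmt_0_general
    (d : ℕ)
    (A : Set ℝ) (hA : Convex ℝ A)
    (g : EuclideanSpace ℝ (Fin d) × ℝ → ℝ) (hg : ContDiff ℝ 1 g)
    (hgconv : ∀ x : EuclideanSpace ℝ (Fin d), ConvexOn ℝ A (fun α => g (x, α)))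
    (f : EuclideanSpace ℝ (Fin d) → ℝ) (hf : ContDiff ℝ 1 f)
    (hfconv : ConvexOn ℝ Set.univ f)
    (hfmin : ∃! x₀ : EuclideanSpace ℝ (Fin d), ∀ x, f x₀ ≤ f x)
    (h : ℝ → ℝ)
    (αstar : ℝ) (hαstarA : αstar ∈ A)
    (hmax : ∀ α ∈ A, h α ≤ h αstar)
    (hattain : ∀ α ∈ A, ∃ x : EuclideanSpace ℝ (Fin d),
      0 ≤ g (x, α) ∧ (∀ y, 0 ≤ g (y, α) → f x ≤ f y) ∧ f x = h α)
    (U : Set ℝ) (hαstarU : αstar ∈ U)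
    (hUopen : ∃ V : Set ℝ, IsOpen V ∧ U = V ∩ A)
    (xstar : ℝ → EuclideanSpace ℝ (Fin d))
    (hxstar : ∀ α ∈ U, 0 ≤ g (xstar α, α) ∧ ∀ y, 0 ≤ g (y, α) → f (xstar α) ≤ f y)
    (hdiff : DifferentiableWithinAt ℝ xstar A αstar) :
    (∀ α ∈ A, 0 ≤ g (xstar αstar, α)) ∧
      ∀ x : EuclideanSpace ℝ (Fin d), (∀ α ∈ A, 0 ≤ g (x, α)) → f (xstar αstar) ≤ f x := by
  obtain ⟨V, hV, rfl⟩ := hUopen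
  set x₀ := xstar αstar
  obtain ⟨hx₀, hx₀min⟩ := hxstar αstar hαstarU
  refine ⟨fun α hα => ?_, fun x hx => hx₀min x (hx αstar hαstarA)⟩
  have hfd : Differentiable ℝ f := hf.differentiable one_ne_zero
  have hgd : Differentiable ℝ g := hg.differentiable one_ne_zero
  have hle : ∀ β ∈ A, ∀ y, (∀ z, 0 ≤ g (z, β) → f y ≤ f z) → f y ≤ f x₀ := by
    intro β hβ y hymin
    obtain ⟨yβ, hyβ, -, hβval⟩ := hattain β hβ
    obtain ⟨y₀, -, hy₀min, h₀val⟩ := hattain αstar hαstarA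
    linarith [hymin yβ hyβ, hmax β hβ, hy₀min x₀ hx₀]
  by_cases hF : fderiv ℝ f x₀ = 0
  · have hglob : ∀ y, f x₀ ≤ f y := fun y => by
      simpa [hF] using hfconv.hasFDerivWithinAt_le_sub (mem_univ x₀) (mem_univ y)
        (hfd x₀).hasFDerivAt.hasFDerivWithinAt
    obtain ⟨xα, hxα, hxαmin, -⟩ := hattain α hα
    rwa [hfmin.unique hglob fun y => (hle α hα xα hxαmin).trans (hglob y)]
  have hx₀min' : IsMinOn f {y | 0 ≤ g (y, αstar)} x₀ := isMinOn_iff.2 hx₀min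
  have hgx : HasFDerivAt (fun y => g (y, αstar)) _ x₀ :=
    (hgd (x₀, αstar)).hasFDerivAt.comp x₀ (hasFDerivAt_prodMk_left x₀ αstar)
  have hactive : g (x₀, αstar) = 0 := hx₀min'.eq_zero_of_fderiv_ne_zero hx₀ hgx.continuousAt hF
  have hU : V ∩ A ∈ 𝓝[A] αstar := mem_nhdsWithin.2 ⟨V, hV, hαstarU.1, subset_rfl⟩
  obtain ⟨L, hL⟩ := hdiff
  exact apply_nonneg_of_isLocalMaxOn_comp hA hαstarA hα hL (hfd x₀).hasFDerivAt
    (mem_of_superset hU fun β hβ => hle β hβ.2 _ (hxstar β hβ).2) (hgd _).hasFDerivAt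
    (mem_of_superset hU fun β hβ => show g (x₀, αstar) ≤ _ from hactive ▸ (hxstar β hβ).1)
    (fun _ => hx₀min'.pos_of_hasFDerivAt_of_pos hactive (hfd x₀).hasFDerivAt hgx hF)
    (hgconv x₀) hactive

/-- Lemma (max-min): if `α*` maximizes the value function `h` of the single-constraint
problems, the minimizer `x*(α*)` of the problem at `α*` solves the semi-infinite problem. -/
theorem stmt_0
    (d : ℕ) (hd : 1 ≤ d)
    (A : Set ℝ) (hA : Convex ℝ A)
    (g : EuclideanSpace ℝ (Fin d) × ℝ → ℝ) (hg : ContDiff ℝ 1 g)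
    (hgconv : ∀ x : EuclideanSpace ℝ (Fin d), ConvexOn ℝ A (fun α => g (x, α)))
    (f : EuclideanSpace ℝ (Fin d) → ℝ) (hf : ContDiff ℝ 1 f)
    (hfconv : ConvexOn ℝ Set.univ f)
    (hfmin : ∃! x₀ : EuclideanSpace ℝ (Fin d), ∀ x, f x₀ ≤ f x)
    (h : ℝ → ℝ)
    (αstar : ℝ) (hαstarA : αstar ∈ A)
    (hmax : ∀ α ∈ A, h α ≤ h αstar)
    (hattain : ∀ α ∈ A, ∃ x : EuclideanSpace ℝ (Fin d),
      0 ≤ g (x, α) ∧ (∀ y, 0 ≤ g (y, α) → f x ≤ f y) ∧ f x = h α)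
    (U : Set ℝ) (hUA : U ⊆ A) (hαstarU : αstar ∈ U)
    (hUopen : ∃ V : Set ℝ, IsOpen V ∧ U = V ∩ A)
    (xstar : ℝ → EuclideanSpace ℝ (Fin d))
    (hxstar : ∀ α ∈ U, 0 ≤ g (xstar α, α) ∧ ∀ y, 0 ≤ g (y, α) → f (xstar α) ≤ f y)
    (hdiff : DifferentiableWithinAt ℝ xstar A αstar)
    (hgrad : fderiv ℝ (fun x => g (x, αstar)) (xstar αstar) ≠ 0) :
    (∀ α ∈ A, 0 ≤ g (xstar αstar, α)) ∧
      ∀ x : EuclideanSpace ℝ (Fin d), (∀ α ∈ A, 0 ≤ g (x, α)) → f (xstar αstar) ≤ f x :=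
  stmt_0_general d A hA g hg hgconv f hf hfconv hfmin h αstar hαstarA hmax hattain U hαstarU hUopen
    xstar hxstar hdiff
end

section
/- Suppose α* ∈ A satisfies h(α*) ≥ h(α) for all α ∈ A, suppose that for every α ∈ A the infimum h(α) is attained, and suppose x*(α*) is a minimizer of f over {x : g(x, α*) ≥ 0} with g(x*(α*), α*) > 0 (the constraint is inactive at the solution). Then x*(α*) is the unique global minimizer of f, it satisfies g(x*(α*), α) ≥ 0 for every α ∈ A, and f(x*(α*)) ≤ f(x) for every x ∈ ℝ^d satisfying g(x, α) ≥ 0 for all α ∈ A. -/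
open Set

/-- Inactive-constraint case: if the constraint is inactive at the minimizer of the
problem at a maximizing `α*`, then that point is the unique global minimizer of `f`
and solves the semi-infinite problem. -/
theorem stmt_1
    (d : ℕ) (hd : 1 ≤ d)
    (A : Set ℝ) (hA : Convex ℝ A)
    (g : EuclideanSpace ℝ (Fin d) × ℝ → ℝ) (hg : ContDiff ℝ 1 g)
    (hgconv : ∀ x : EuclideanSpace ℝ (Fin d), ConvexOn ℝ A (fun α => g (x, α)))
    (f : EuclideanSpace ℝ (Fin d) → ℝ) (hf : ContDiff ℝ 1 f)
    (hfconv : ConvexOn ℝ Set.univ f)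
    (hfmin : ∃! x₀ : EuclideanSpace ℝ (Fin d), ∀ x, f x₀ ≤ f x)
    (h : ℝ → ℝ)
    (αstar : ℝ) (hαstarA : αstar ∈ A)
    (hmax : ∀ α ∈ A, h α ≤ h αstar)
    (hattain : ∀ α ∈ A, ∃ x : EuclideanSpace ℝ (Fin d),
      0 ≤ g (x, α) ∧ (∀ y, 0 ≤ g (y, α) → f x ≤ f y) ∧ f x = h α)
    (xs : EuclideanSpace ℝ (Fin d))
    (hxs_feas : 0 ≤ g (xs, αstar))
    (hxs_min : ∀ y, 0 ≤ g (y, αstar) → f xs ≤ f y)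
    (hxs_inactive : 0 < g (xs, αstar)) :
    ((∀ x, f xs ≤ f x) ∧ (∀ y : EuclideanSpace ℝ (Fin d), (∀ x, f y ≤ f x) → y = xs)) ∧
      (∀ α ∈ A, 0 ≤ g (xs, α)) ∧
      ∀ x : EuclideanSpace ℝ (Fin d), (∀ α ∈ A, 0 ≤ g (x, α)) → f xs ≤ f x := by

  -- Step 1: xs is a global minimizer of f
  have hglob : ∀ x, f xs ≤ f x := by
    intro x
    by_contra hlt
    push_neg at hlt
    have hc : Continuous fun t : ℝ => g (xs + t • (x - xs), αstar) := by
      apply hg.continuous.comp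
      continuity
    have h0 : 0 < g (xs + (0:ℝ) • (x - xs), αstar) := by simpa using hxs_inactive
    have hev1 : ∀ᶠ t in nhdsWithin (0:ℝ) (Set.Ioi 0),
        0 < g (xs + t • (x - xs), αstar) :=
      (hc.continuousAt.eventually (eventually_gt_nhds h0)).filter_mono nhdsWithin_le_nhds
    have hev2 : ∀ᶠ t in nhdsWithin (0:ℝ) (Set.Ioi 0), t ∈ Set.Ioo (0:ℝ) 1 :=
      Ioo_mem_nhdsGT_of_mem (by constructor <;> norm_num)
    obtain ⟨t, hgt, ht0, ht1⟩ := (hev1.and hev2).exists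
    have hfeas : 0 ≤ g (xs + t • (x - xs), αstar) := le_of_lt hgt
    have h1 : f xs ≤ f (xs + t • (x - xs)) := hxs_min _ hfeas
    have heq : xs + t • (x - xs) = (1 - t) • xs + t • x := by
      module
    have h2 : f ((1 - t) • xs + t • x) ≤ (1 - t) * f xs + t * f x :=
      hfconv.2 (Set.mem_univ xs) (Set.mem_univ x) (by linarith [ht1.le]) ht0.le (by ring)
    rw [heq] at h1
    nlinarith [ht0, ht1, hlt]
  -- Step 2: uniqueness
  obtain ⟨x₀, hx₀, huniq⟩ := hfmin
  have hxs_eq : xs = x₀ := huniq xs hglob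
  refine ⟨⟨hglob, fun y hy => by rw [huniq y hy, hxs_eq]⟩, ?_, ?_⟩
  · -- feasibility for all α
    intro α hα
    obtain ⟨xα, hxα_feas, hxα_min, hxα_val⟩ := hattain α hα
    obtain ⟨xst, hs_feas, hs_min, hs_val⟩ := hattain αstar hαstarA
    have hstar_eq : h αstar = f xs :=
      le_antisymm (hs_val ▸ hs_min xs hxs_feas) (hs_val ▸ hglob xst)
    have hle : f xα ≤ f xs := by
      rw [hxα_val, ← hstar_eq] at *
      exact hmax α hα
    have hxα_glob : ∀ y, f xα ≤ f y := fun y => le_trans hle (hglob y)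
    have : xα = xs := by rw [huniq xα hxα_glob, hxs_eq]
    rwa [← this]
  · intro x _
    exact hglob x
end

section
/- Suppose α* ∈ A satisfies h(α*) ≥ h(α) for all α ∈ A, suppose there is a relatively open neighborhood U of α* in A and a map x* : U → ℝ^d such that for each α ∈ U the point x*(α) minimizes f over {x : g(x, α) ≥ 0} and x* is differentiable at α* (within A), suppose g(x*(α*), α*) = 0, and suppose there exists a Lagrange multiplier λ < 0 with ∇f(x*(α*)) + λ∇ₓg(x*(α*), α*) = 0. Then for every v ∈ ℝ with α* + v ∈ A one has v · ∂_αg(x*(α*), α*) ≥ 0. -/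
open Set Filter Topology

/-!
Along `α ↦ x*(α)` the constraint value `g (x*(α), α)` is `≥ 0` with equality at `α*`, so it
has a local minimum on `A` there, while `f (x*(α)) = h α` has a local maximum. With
`L = D x*(α*)`, the first-order conditions in the direction `v` read
`∇ₓg (L v) + v ∂_αg ≥ 0` and `∇f (L v) ≤ 0`, and the multiplier relation `∇f = -λ ∇ₓg`
with `λ < 0` turns the second into `∇ₓg (L v) ≤ 0`.
-/

section

variable {E F : Type*} [NormedAddCommGroup E] [NormedSpace ℝ E]
  [NormedAddCommGroup F] [NormedSpace ℝ F]

theorem DifferentiableAt.fderiv_prod_apply {g : E × ℝ → F} {x₀ : E} {a₀ : ℝ}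
    (hg : DifferentiableAt ℝ g (x₀, a₀)) (u : E) (t : ℝ) :
    fderiv ℝ g (x₀, a₀) (u, t) =
      fderiv ℝ (fun x => g (x, a₀)) x₀ u + t • deriv (fun α => g (x₀, α)) a₀ := by
  have hx : HasFDerivAt (fun x => g (x, a₀))
      ((fderiv ℝ g (x₀, a₀)).comp (.inl ℝ E ℝ)) x₀ :=
    hg.hasFDerivAt.comp x₀ (hasFDerivAt_prodMk_left x₀ a₀)
  have hα_fderiv : HasFDerivAt (fun α => g (x₀, α))
      ((fderiv ℝ g (x₀, a₀)).comp (.inr ℝ E ℝ)) a₀ :=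
    hg.hasFDerivAt.comp a₀ (hasFDerivAt_prodMk_right x₀ a₀)
  have hα : HasDerivAt (fun α => g (x₀, α)) (fderiv ℝ g (x₀, a₀) (0, 1)) a₀ := by
    simpa using hα_fderiv.hasDerivAt
  have hsplit : ((u, t) : E × ℝ) = (u, 0) + t • (0, 1) := by simp
  rw [hx.fderiv, hα.deriv, hsplit, map_add, map_smul]
  rfl

theorem mul_deriv_nonneg_of_isLocalMinOn_of_isLocalMaxOn
    {g : E × ℝ → ℝ} {f : E → ℝ} {xs : ℝ → E} {L : ℝ →L[ℝ] E} {A : Set ℝ} {a lam v : ℝ}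
    (hg : DifferentiableAt ℝ g (xs a, a)) (hf : DifferentiableAt ℝ f (xs a))
    (hxs : HasFDerivWithinAt xs L A a)
    (hmin : IsLocalMinOn (fun α => g (xs α, α)) A a)
    (hmax : IsLocalMaxOn (fun α => f (xs α)) A a)
    (hlam : lam < 0)
    (hkkt : fderiv ℝ f (xs a) + lam • fderiv ℝ (fun x => g (x, a)) (xs a) = 0)
    (hv : v ∈ posTangentConeAt A a) :
    0 ≤ v * deriv (fun α => g (xs a, α)) a := by
  have hconstraint : 0 ≤ fderiv ℝ g (xs a, a) (L v, v) := by
    simpa using hmin.hasFDerivWithinAt_nonneg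
      (hg.hasFDerivAt.comp_hasFDerivWithinAt (f := fun α => (xs α, α)) a
        (hxs.prodMk (hasFDerivWithinAt_id a A))) hv
  have hobjective : fderiv ℝ f (xs a) (L v) ≤ 0 := by
    simpa using hmax.hasFDerivWithinAt_nonpos (hf.hasFDerivAt.comp_hasFDerivWithinAt a hxs) hv
  have hkkt_v :
      fderiv ℝ f (xs a) (L v) + lam * fderiv ℝ (fun x => g (x, a)) (xs a) (L v) = 0 := by
    simpa using DFunLike.congr_fun hkkt (L v)
  rw [hg.fderiv_prod_apply, smul_eq_mul] at hconstraint
  nlinarith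

end

theorem stmt_2_general
    (d : ℕ)
    (A : Set ℝ) (hA : Convex ℝ A)
    (g : EuclideanSpace ℝ (Fin d) × ℝ → ℝ) (hg : ContDiff ℝ 1 g)
    (f : EuclideanSpace ℝ (Fin d) → ℝ) (hf : ContDiff ℝ 1 f)
    (h : ℝ → ℝ)
    (hdef : ∀ α ∈ A, IsGLB (f '' {x | 0 ≤ g (x, α)}) (h α))
    (αstar : ℝ) (hαstarA : αstar ∈ A)
    (hmax : ∀ α ∈ A, h α ≤ h αstar)
    (U : Set ℝ) (hαstarU : αstar ∈ U)
    (hUopen : ∃ V : Set ℝ, IsOpen V ∧ U = V ∩ A)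
    (xstar : ℝ → EuclideanSpace ℝ (Fin d))
    (hxstar : ∀ α ∈ U, 0 ≤ g (xstar α, α) ∧ ∀ y, 0 ≤ g (y, α) → f (xstar α) ≤ f y)
    (hdiff : DifferentiableWithinAt ℝ xstar A αstar)
    (hactive : g (xstar αstar, αstar) = 0)
    (lam : ℝ) (hlam_neg : lam < 0)
    (hkkt : fderiv ℝ f (xstar αstar)
      + lam • fderiv ℝ (fun x => g (x, αstar)) (xstar αstar) = 0) :
    ∀ v : ℝ, αstar + v ∈ A →
      0 ≤ v * deriv (fun α => g (xstar αstar, α)) αstar := by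
  intro v hv
  obtain ⟨V, hV, rfl⟩ := hUopen
  have hU : V ∩ A ∈ 𝓝[A] αstar := inter_mem (mem_nhdsWithin_of_mem_nhds (hV.mem_nhds hαstarU.1)) self_mem_nhdsWithin
  have hvalue : ∀ α ∈ V ∩ A, f (xstar α) = h α := fun α hα =>
    (IsLeast.isGLB ⟨mem_image_of_mem f (hxstar α hα).1,
      forall_mem_image.2 (hxstar α hα).2⟩).unique (hdef α hα.2)
  have hconstraint_min : IsLocalMinOn (fun α => g (xstar α, α)) A αstar := by
    filter_upwards [hU] with α hα
    rw [hactive]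
    exact (hxstar α hα).1
  have hvalue_max : IsLocalMaxOn (fun α => f (xstar α)) A αstar := by
    filter_upwards [hU] with α hα
    rw [hvalue α hα, hvalue αstar hαstarU]
    exact hmax α hα.2
  exact mul_deriv_nonneg_of_isLocalMinOn_of_isLocalMaxOn
    (hg.differentiable one_ne_zero _) (hf.differentiable one_ne_zero _)
    hdiff.hasFDerivWithinAt hconstraint_min hvalue_max hlam_neg hkkt
    (mem_posTangentConeAt_of_segment_subset (hA.segment_subset hαstarA hv))

/-- Active-constraint case: the directional derivative of `g` in `α` at the KKT point
is nonnegative in every direction pointing into `A`. -/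
theorem stmt_2
    (d : ℕ) (hd : 1 ≤ d)
    (A : Set ℝ) (hA : Convex ℝ A)
    (g : EuclideanSpace ℝ (Fin d) × ℝ → ℝ) (hg : ContDiff ℝ 1 g)
    (hgconv : ∀ x : EuclideanSpace ℝ (Fin d), ConvexOn ℝ A (fun α => g (x, α)))
    (f : EuclideanSpace ℝ (Fin d) → ℝ) (hf : ContDiff ℝ 1 f)
    (hfconv : ConvexOn ℝ Set.univ f)
    (hfmin : ∃! x₀ : EuclideanSpace ℝ (Fin d), ∀ x, f x₀ ≤ f x)
    (h : ℝ → ℝ)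
    (hdef : ∀ α ∈ A, IsGLB (f '' {x | 0 ≤ g (x, α)}) (h α))
    (αstar : ℝ) (hαstarA : αstar ∈ A)
    (hmax : ∀ α ∈ A, h α ≤ h αstar)
    (U : Set ℝ) (hUA : U ⊆ A) (hαstarU : αstar ∈ U)
    (hUopen : ∃ V : Set ℝ, IsOpen V ∧ U = V ∩ A)
    (xstar : ℝ → EuclideanSpace ℝ (Fin d))
    (hxstar : ∀ α ∈ U, 0 ≤ g (xstar α, α) ∧ ∀ y, 0 ≤ g (y, α) → f (xstar α) ≤ f y)
    (hdiff : DifferentiableWithinAt ℝ xstar A αstar)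
    (hactive : g (xstar αstar, αstar) = 0)
    (lam : ℝ) (hlam_neg : lam < 0)
    (hkkt : fderiv ℝ f (xstar αstar)
      + lam • fderiv ℝ (fun x => g (x, αstar)) (xstar αstar) = 0) :
    ∀ v : ℝ, αstar + v ∈ A →
      0 ≤ v * deriv (fun α => g (xstar αstar, α)) αstar :=
  stmt_2_general d A hA g hg f hf h hdef αstar hαstarA hmax U hαstarU hUopen xstar hxstar hdiff
    hactive lam hlam_neg hkkt
end

section
/- Fix α ∈ [0,1]. If ‖αΔna + (1 − α)Δnb‖ ≠ 0, then the single-constraint problem P(α) has a unique minimizer, i.e., there is exactly one point (x1a, x1b, x2a, x2b) ∈ (ℝ^d)⁴ satisfying ‖α(x1a − x2a) + (1 − α)(x1b − x2b)‖ ≥ r + r′ at which F attains its minimum over the set of all points satisfying this constraint. -/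
/-!
Writing `L x = ∑ i, a i • x i` for the constraint map and `w = L n`, the weighted Cauchy–Schwarz
inequality gives `‖L x - w‖² ≤ σ · 2 F(x)` with `σ = ∑ i, a i ^ 2 / ρ i`. On the feasible set
`‖L x - w‖ ≥ t := max 0 (c - ‖w‖)`, so `F ≥ t² / (2σ)`, and this bound is attained by moving each
`n i` by `(a i / ρ i) • λ` for the multiple `λ` of `w` that pushes `L x` radially onto the sphere
of radius `c`. At a minimizer `x` both inequalities are equalities, which by strict convexity of
the norm forces `L x` to be that same point of the sphere; the midpoint of two minimizers is then
feasible, and the parallelogram law makes `F` strictly smaller there unless they coincide.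
-/

open Set

/-- The proximal objective `F` of the two-agent collision problem. -/
noncomputable def collF (d : ℕ) (ρ1a ρ1b ρ2a ρ2b : ℝ)
    (n1a n1b n2a n2b : EuclideanSpace ℝ (Fin d))
    (p : EuclideanSpace ℝ (Fin d) × EuclideanSpace ℝ (Fin d) ×
      EuclideanSpace ℝ (Fin d) × EuclideanSpace ℝ (Fin d)) : ℝ :=
  ρ1a / 2 * ‖p.1 - n1a‖ ^ 2 + ρ1b / 2 * ‖p.2.1 - n1b‖ ^ 2 +
    ρ2a / 2 * ‖p.2.2.1 - n2a‖ ^ 2 + ρ2b / 2 * ‖p.2.2.2 - n2b‖ ^ 2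

/-- The no-collision constraint of the single-constraint problem `P(α)`,
for `p = (x1a, x1b, x2a, x2b)`. -/
def collFeas (d : ℕ) (r r' α : ℝ)
    (p : EuclideanSpace ℝ (Fin d) × EuclideanSpace ℝ (Fin d) ×
      EuclideanSpace ℝ (Fin d) × EuclideanSpace ℝ (Fin d)) : Prop :=
  r + r' ≤ ‖α • (p.1 - p.2.2.1) + (1 - α) • (p.2.1 - p.2.2.2)‖

open Finset

theorem norm_sum_smul_sq_le {ι E : Type*} [Fintype ι] [SeminormedAddCommGroup E]
    [NormedSpace ℝ E] (a ρ : ι → ℝ) (e : ι → E) (hρ : ∀ i, 0 < ρ i) :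
    ‖∑ i, a i • e i‖ ^ 2 ≤ (∑ i, a i ^ 2 / ρ i) * ∑ i, ρ i * ‖e i‖ ^ 2 := by
  calc ‖∑ i, a i • e i‖ ^ 2 ≤ (∑ i, |a i| * ‖e i‖) ^ 2 := by
        gcongr
        exact norm_sum_le_of_le _ fun i _ => (norm_smul (a i) (e i)).le
    _ ≤ (∑ i, a i ^ 2 / ρ i) * ∑ i, ρ i * ‖e i‖ ^ 2 := by
        refine sum_sq_le_sum_mul_sum_of_sq_le_mul _ (fun i _ => by have := hρ i; positivity)
          (fun i _ => by have := hρ i; positivity) fun i _ => le_of_eq ?_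
        have := (hρ i).ne'
        rw [mul_pow, sq_abs]
        field_simp

section Radial

variable {E : Type*} [NormedAddCommGroup E] [NormedSpace ℝ E] [StrictConvexSpace ℝ E]

theorem eq_smul_of_norm_sub_le_of_add_le_norm {u w : E} {t : ℝ} (hw : w ≠ 0)
    (hsub : ‖u - w‖ ≤ t) (hadd : ‖w‖ + t ≤ ‖u‖) : u = (1 + t / ‖w‖) • w := by
  have hnorm : ‖(u - w) + w‖ = ‖u - w‖ + ‖w‖ := by
    rw [sub_add_cancel]
    linarith [norm_sub_norm_le u w]
  obtain ⟨s, hs0, hs⟩ := (sameRay_iff_norm_add.mpr hnorm).exists_nonneg_right hw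
  have hst : s * ‖w‖ = t := by
    rw [← abs_of_nonneg hs0, ← Real.norm_eq_abs, ← norm_smul, ← hs]
    linarith [norm_sub_norm_le u w]
  rw [← hst, mul_div_cancel_right₀ _ (norm_ne_zero_iff.mpr hw), add_smul, one_smul, ← hs,
    add_sub_cancel]

/-- `max 0 (c - ‖w‖)` is the distance from `w ≠ 0` to `{v | c ≤ ‖v‖}`, and the point
`(1 + max 0 (c - ‖w‖) / ‖w‖) • w` is the unique nearest one. -/
theorem eq_smul_of_le_norm_of_norm_sub_le {u w : E} {c : ℝ} (hw : w ≠ 0) (hu : c ≤ ‖u‖)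
    (hsub : ‖u - w‖ ≤ max 0 (c - ‖w‖)) : u = (1 + max 0 (c - ‖w‖) / ‖w‖) • w := by
  refine eq_smul_of_norm_sub_le_of_add_le_norm hw hsub ?_
  rcases le_total c ‖w‖ with hc | hc
  · rw [max_eq_left (sub_nonpos.mpr hc)] at hsub ⊢
    linarith [norm_sub_norm_le w u, norm_sub_rev w u]
  · rw [max_eq_right (sub_nonneg.mpr hc)]
    linarith

end Radial

section ProxCost

variable {ι E : Type*} [Fintype ι] [NormedAddCommGroup E]

noncomputable def proxCost (ρ : ι → ℝ) (n x : ι → E) : ℝ :=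
  ∑ i, ρ i / 2 * ‖x i - n i‖ ^ 2

variable {ρ : ι → ℝ}

theorem eq_of_proxCost_nonpos (hρ : ∀ i, 0 < ρ i) {n x : ι → E} (h : proxCost ρ n x ≤ 0) :
    x = n := by
  have hterm : ∀ i ∈ Finset.univ, 0 ≤ ρ i / 2 * ‖x i - n i‖ ^ 2 := fun i _ => by
    have := hρ i; positivity
  have hzero := (sum_eq_zero_iff_of_nonneg hterm).mp (h.antisymm (sum_nonneg hterm))
  funext i
  have := hzero i (mem_univ i)
  simp_all [(hρ i).ne', sub_eq_zero]

theorem sum_sq_div_pos [Module ℝ E] (hρ : ∀ i, 0 < ρ i) {a : ι → ℝ} {n : ι → E}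
    (hw : ∑ i, a i • n i ≠ 0) : 0 < ∑ i, a i ^ 2 / ρ i := by
  obtain ⟨j, -, hj⟩ := exists_ne_zero_of_sum_ne_zero hw
  have hterm : ∀ i ∈ Finset.univ, 0 ≤ a i ^ 2 / ρ i := fun i _ => by
    have := hρ i; positivity
  exact (div_pos (sq_pos_of_ne_zero (left_ne_zero_of_smul hj)) (hρ j)).trans_le
    (single_le_sum hterm (mem_univ j))

theorem sq_norm_sum_smul_sub_le [NormedSpace ℝ E] (hρ : ∀ i, 0 < ρ i) (a : ι → ℝ)
    (n x : ι → E) :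
    ‖∑ i, a i • x i - ∑ i, a i • n i‖ ^ 2 ≤ (∑ i, a i ^ 2 / ρ i) * (2 * proxCost ρ n x) := by
  have h := norm_sum_smul_sq_le a ρ (x - n) hρ
  simp only [Pi.sub_apply, smul_sub, sum_sub_distrib] at h
  convert h using 2
  simp only [proxCost, mul_sum]
  refine sum_congr rfl fun i _ => by ring

theorem sq_div_le_proxCost [NormedSpace ℝ E] (hρ : ∀ i, 0 < ρ i) {a : ι → ℝ} {n : ι → E}
    (hw : ∑ i, a i • n i ≠ 0) {c : ℝ} {y : ι → E} (hy : c ≤ ‖∑ i, a i • y i‖) :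
    max 0 (c - ‖∑ i, a i • n i‖) ^ 2 / (2 * ∑ i, a i ^ 2 / ρ i) ≤ proxCost ρ n y := by
  have ht : max 0 (c - ‖∑ i, a i • n i‖) ≤ ‖∑ i, a i • y i - ∑ i, a i • n i‖ :=
    max_le (norm_nonneg _) (by linarith [norm_sub_norm_le (∑ i, a i • y i) (∑ i, a i • n i)])
  rw [div_le_iff₀ (by linarith [sum_sq_div_pos hρ hw])]
  nlinarith [sq_norm_sum_smul_sub_le hρ a n y, pow_le_pow_left₀ (le_max_left _ _) ht 2]

theorem sum_smul_add_div_smul [Module ℝ E] (a : ι → ℝ) (n : ι → E) (v : E) :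
    ∑ i, a i • (n i + (a i / ρ i) • v) = ∑ i, a i • n i + (∑ i, a i ^ 2 / ρ i) • v := by
  simp only [smul_add, smul_smul, sum_add_distrib, sum_smul, mul_div_assoc', ← sq]

theorem proxCost_add_div_smul [NormedSpace ℝ E] (hρ : ∀ i, 0 < ρ i) (a : ι → ℝ) (n : ι → E)
    (v : E) :
    proxCost ρ n (fun i => n i + (a i / ρ i) • v) = (∑ i, a i ^ 2 / ρ i) / 2 * ‖v‖ ^ 2 := by
  simp only [proxCost, add_sub_cancel_left, norm_smul, mul_pow, Real.norm_eq_abs, sq_abs,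
    sum_div, sum_mul]
  refine sum_congr rfl fun i _ => ?_
  have := (hρ i).ne'
  field_simp

theorem norm_midpoint_sub_sq [InnerProductSpace ℝ E] (x y n : E) :
    ‖(2 : ℝ)⁻¹ • (x + y) - n‖ ^ 2 = ‖x - n‖ ^ 2 / 2 + ‖y - n‖ ^ 2 / 2 - ‖x - y‖ ^ 2 / 4 := by
  have hmid : (2 : ℝ)⁻¹ • (x + y) - n = (2 : ℝ)⁻¹ • ((x - n) + (y - n)) := by module
  have hsub : (x - n) - (y - n) = x - y := by abel
  have hpar := parallelogram_law_with_norm ℝ (x - n) (y - n)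
  rw [hsub] at hpar
  rw [hmid, norm_smul, mul_pow]
  norm_num
  linarith

theorem proxCost_midpoint [InnerProductSpace ℝ E] (n x y : ι → E) :
    proxCost ρ n ((2 : ℝ)⁻¹ • (x + y)) =
      proxCost ρ n x / 2 + proxCost ρ n y / 2 - proxCost ρ y x / 4 := by
  simp only [proxCost, Pi.smul_apply, Pi.add_apply, norm_midpoint_sub_sq, sum_div,
    ← sum_add_distrib, ← sum_sub_distrib]
  refine sum_congr rfl fun i _ => by ring

theorem eq_of_le_proxCost_midpoint [InnerProductSpace ℝ E] (hρ : ∀ i, 0 < ρ i)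
    {n x y : ι → E} {m : ℝ} (hx : proxCost ρ n x ≤ m) (hy : proxCost ρ n y ≤ m)
    (hmid : m ≤ proxCost ρ n ((2 : ℝ)⁻¹ • (x + y))) : x = y := by
  rw [proxCost_midpoint] at hmid
  exact eq_of_proxCost_nonpos hρ (by linarith)

theorem sum_smul_eq_of_proxCost_le [InnerProductSpace ℝ E] (hρ : ∀ i, 0 < ρ i)
    {a : ι → ℝ} {n : ι → E} (hw : ∑ i, a i • n i ≠ 0) {c : ℝ} {y : ι → E}
    (hy : c ≤ ‖∑ i, a i • y i‖)
    (hFy : proxCost ρ n y ≤ max 0 (c - ‖∑ i, a i • n i‖) ^ 2 / (2 * ∑ i, a i ^ 2 / ρ i)) :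
    ∑ i, a i • y i = (1 + max 0 (c - ‖∑ i, a i • n i‖) / ‖∑ i, a i • n i‖) • ∑ i, a i • n i := by
  refine eq_smul_of_le_norm_of_norm_sub_le hw hy
    ((pow_le_pow_iff_left₀ (norm_nonneg _) (le_max_left _ _) two_ne_zero).mp ?_)
  have hσ := sum_sq_div_pos hρ hw
  calc _ ≤ (∑ i, a i ^ 2 / ρ i) * (2 * proxCost ρ n y) := sq_norm_sum_smul_sub_le hρ a n y
    _ ≤ (∑ i, a i ^ 2 / ρ i) *
        (2 * (max 0 (c - ‖∑ i, a i • n i‖) ^ 2 / (2 * ∑ i, a i ^ 2 / ρ i))) := by gcongr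
    _ = _ := by field_simp

end ProxCost

theorem existsUnique_proxCost_minimizer {ι E : Type*} [Fintype ι] [NormedAddCommGroup E]
    [InnerProductSpace ℝ E] (ρ a : ι → ℝ) (n : ι → E) (c : ℝ) (hρ : ∀ i, 0 < ρ i)
    (hw : ∑ i, a i • n i ≠ 0) :
    ∃! x : ι → E, c ≤ ‖∑ i, a i • x i‖ ∧
      ∀ y : ι → E, c ≤ ‖∑ i, a i • y i‖ → proxCost ρ n x ≤ proxCost ρ n y := by
  set w := ∑ i, a i • n i
  set σ := ∑ i, a i ^ 2 / ρ i with hσdef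
  set t := max 0 (c - ‖w‖)
  have hwpos : 0 < ‖w‖ := norm_pos_iff.mpr hw
  have hσ : 0 < σ := sum_sq_div_pos hρ hw
  set xs : ι → E := fun i => n i + (a i / ρ i) • ((t / (σ * ‖w‖)) • w)
  have hLxs : ∑ i, a i • xs i = (1 + t / ‖w‖) • w := by
    rw [sum_smul_add_div_smul, ← hσdef, smul_smul]
    match_scalars
    field_simp
  have hxs : c ≤ ‖∑ i, a i • xs i‖ := by
    rw [hLxs, norm_smul, Real.norm_eq_abs, abs_of_nonneg (by positivity), add_mul,
      div_mul_cancel₀ _ hwpos.ne']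
    linarith [le_max_right 0 (c - ‖w‖)]
  have hFxs : proxCost ρ n xs = t ^ 2 / (2 * σ) := by
    rw [proxCost_add_div_smul hρ, ← hσdef, norm_smul, Real.norm_eq_abs,
      abs_of_nonneg (by positivity : 0 ≤ t / (σ * ‖w‖))]
    field_simp
  refine ⟨xs, ⟨hxs, fun y hy => hFxs ▸ sq_div_le_proxCost hρ hw hy⟩, fun y ⟨hy, hmin⟩ => ?_⟩
  have hFy : proxCost ρ n y ≤ t ^ 2 / (2 * σ) := hFxs ▸ hmin xs hxs
  refine eq_of_le_proxCost_midpoint hρ hFy hFxs.le (sq_div_le_proxCost hρ hw ?_)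
  have hLmid : ∑ i, a i • ((2 : ℝ)⁻¹ • (y + xs)) i = ∑ i, a i • xs i := by
    simp only [Pi.smul_apply, Pi.add_apply, smul_add, smul_comm (a _) (2 : ℝ)⁻¹, ← smul_sum,
      sum_add_distrib, sum_smul_eq_of_proxCost_le hρ hw hy hFy, hLxs]
    module
  rwa [hLmid]

@[simps]
def prodFourEquiv (E : Type*) : E × E × E × E ≃ (Fin 4 → E) where
  toFun p := ![p.1, p.2.1, p.2.2.1, p.2.2.2]
  invFun x := (x 0, x 1, x 2, x 3)
  left_inv _ := rfl
  right_inv x := by ext i; fin_cases i <;> rfl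

theorem stmt_3_general
    (d : ℕ)
    (n1a n1b n2a n2b : EuclideanSpace ℝ (Fin d))
    (ρ1a ρ1b ρ2a ρ2b : ℝ)
    (hρ1a : 0 < ρ1a) (hρ1b : 0 < ρ1b) (hρ2a : 0 < ρ2a) (hρ2b : 0 < ρ2b)
    (r r' : ℝ)
    (α : ℝ)
    (hne : ‖α • (n1a - n2a) + (1 - α) • (n1b - n2b)‖ ≠ 0) :
    ∃! p : EuclideanSpace ℝ (Fin d) × EuclideanSpace ℝ (Fin d) ×
        EuclideanSpace ℝ (Fin d) × EuclideanSpace ℝ (Fin d),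
      collFeas d r r' α p ∧
        ∀ q, collFeas d r r' α q →
          collF d ρ1a ρ1b ρ2a ρ2b n1a n1b n2a n2b p ≤
            collF d ρ1a ρ1b ρ2a ρ2b n1a n1b n2a n2b q := by
  set e := prodFourEquiv (EuclideanSpace ℝ (Fin d))
  set a : Fin 4 → ℝ := ![α, 1 - α, -α, -(1 - α)]
  have hL : ∀ p, ∑ i, a i • e p i = α • (p.1 - p.2.2.1) + (1 - α) • (p.2.1 - p.2.2.2) := by
    intro p
    simp [Fin.sum_univ_four, a, e]
    module
  have hF : ∀ p, collF d ρ1a ρ1b ρ2a ρ2b n1a n1b n2a n2b p =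
      proxCost ![ρ1a, ρ1b, ρ2a, ρ2b] (e (n1a, n1b, n2a, n2b)) (e p) := by
    intro p
    simp [collF, proxCost, Fin.sum_univ_four, e]
  have key := existsUnique_proxCost_minimizer ![ρ1a, ρ1b, ρ2a, ρ2b] a (e (n1a, n1b, n2a, n2b))
    (r + r') (by intro i; fin_cases i <;> assumption) (by rw [hL]; exact norm_ne_zero_iff.mp hne)
  refine (e.existsUnique_congr fun p => ?_).mpr key
  refine and_congr (by rw [collFeas, hL]) (e.forall_congr fun q => ?_)
  rw [collFeas, hL, hF, hF]

/-- If `‖α Δna + (1-α) Δnb‖ ≠ 0` then the single-constraint problem `P(α)` has a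
unique minimizer. -/
theorem stmt_3
    (d : ℕ) (hd : 1 ≤ d)
    (n1a n1b n2a n2b : EuclideanSpace ℝ (Fin d))
    (ρ1a ρ1b ρ2a ρ2b : ℝ)
    (hρ1a : 0 < ρ1a) (hρ1b : 0 < ρ1b) (hρ2a : 0 < ρ2a) (hρ2b : 0 < ρ2b)
    (r r' : ℝ) (hr : 0 < r) (hr' : 0 < r')
    (α : ℝ) (hα : α ∈ Icc (0 : ℝ) 1)
    (hne : ‖α • (n1a - n2a) + (1 - α) • (n1b - n2b)‖ ≠ 0) :
    ∃! p : EuclideanSpace ℝ (Fin d) × EuclideanSpace ℝ (Fin d) ×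
        EuclideanSpace ℝ (Fin d) × EuclideanSpace ℝ (Fin d),
      collFeas d r r' α p ∧
        ∀ q, collFeas d r r' α q →
          collF d ρ1a ρ1b ρ2a ρ2b n1a n1b n2a n2b p ≤
            collF d ρ1a ρ1b ρ2a ρ2b n1a n1b n2a n2b q :=
  stmt_3_general d n1a n1b n2a n2b ρ1a ρ1b ρ2a ρ2b hρ1a hρ1b hρ2a hρ2b r r' α hne
end

section
/- Fix α ∈ [0,1] with ‖αΔna + (1 − α)Δnb‖ ≠ 0. Then the minimum value of the single-constraint problem P(α), i.e., the infimum of F over {(x1a, x1b, x2a, x2b) : ‖α(x1a − x2a) + (1 − α)(x1b − x2b)‖ ≥ r + r′}, equals h(α)²/2. -/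
open Set

private lemma cs4 (f1 f2 f3 f4 g1 g2 g3 g4 : ℝ) :
    (f1 * g1 + f2 * g2 + f3 * g3 + f4 * g4) ^ 2 ≤
      (f1 ^ 2 + f2 ^ 2 + f3 ^ 2 + f4 ^ 2) * (g1 ^ 2 + g2 ^ 2 + g3 ^ 2 + g4 ^ 2) := by
  nlinarith [sq_nonneg (f1 * g2 - f2 * g1), sq_nonneg (f1 * g3 - f3 * g1),
    sq_nonneg (f1 * g4 - f4 * g1), sq_nonneg (f2 * g3 - f3 * g2),
    sq_nonneg (f2 * g4 - f4 * g2), sq_nonneg (f3 * g4 - f4 * g3)]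

private lemma collval (ρ1a ρ1b ρ2a ρ2b N m0 α S : ℝ)
    (h1 : 0 < ρ1a) (h2 : 0 < ρ1b) (h3 : 0 < ρ2a) (h4 : 0 < ρ2b)
    (hne : N ≠ 0) (hS0 : 0 < S)
    (hfac : α ^ 2 / ρ1a + α ^ 2 / ρ2a + (1 - α) ^ 2 / ρ1b + (1 - α) ^ 2 / ρ2b = S) :
    ρ1a / 2 * ((α / ρ1a) ^ 2 * ((m0 / (N * S)) ^ 2 * N ^ 2)) +
    ρ1b / 2 * (((1 - α) / ρ1b) ^ 2 * ((m0 / (N * S)) ^ 2 * N ^ 2)) +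
    ρ2a / 2 * ((α / ρ2a) ^ 2 * ((m0 / (N * S)) ^ 2 * N ^ 2)) +
    ρ2b / 2 * (((1 - α) / ρ2b) ^ 2 * ((m0 / (N * S)) ^ 2 * N ^ 2)) =
    m0 ^ 2 / (2 * S) := by
  have hx : (m0 / (N * S)) ^ 2 * N ^ 2 = m0 ^ 2 / S ^ 2 := by
    field_simp [hne, hS0.ne']
  rw [hx]
  have hsum : ρ1a / 2 * ((α / ρ1a) ^ 2 * (m0 ^ 2 / S ^ 2)) +
      ρ1b / 2 * (((1 - α) / ρ1b) ^ 2 * (m0 ^ 2 / S ^ 2)) +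
      ρ2a / 2 * ((α / ρ2a) ^ 2 * (m0 ^ 2 / S ^ 2)) +
      ρ2b / 2 * (((1 - α) / ρ2b) ^ 2 * (m0 ^ 2 / S ^ 2)) =
      (α ^ 2 / ρ1a + α ^ 2 / ρ2a + (1 - α) ^ 2 / ρ1b + (1 - α) ^ 2 / ρ2b) * (m0 ^ 2 / S ^ 2) / 2 := by
    field_simp [h1.ne', h2.ne', h3.ne', h4.ne']
    ring
  rw [hsum, hfac]
  field_simp [hS0.ne']

/-- If `‖α Δna + (1-α) Δnb‖ ≠ 0` then the minimum value of the single-constraint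
problem `P(α)` equals `h(α)² / 2`. -/
theorem stmt_4
    (d : ℕ) (hd : 1 ≤ d)
    (n1a n1b n2a n2b : EuclideanSpace ℝ (Fin d))
    (ρ1a ρ1b ρ2a ρ2b : ℝ)
    (hρ1a : 0 < ρ1a) (hρ1b : 0 < ρ1b) (hρ2a : 0 < ρ2a) (hρ2b : 0 < ρ2b)
    (r r' : ℝ) (hr : 0 < r) (hr' : 0 < r')
    (ρta ρtb : ℝ) (hρta : ρta = (ρ1a⁻¹ + ρ2a⁻¹)⁻¹) (hρtb : ρtb = (ρ1b⁻¹ + ρ2b⁻¹)⁻¹)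
    (h : ℝ → ℝ)
    (hh : ∀ β : ℝ, h β = max 0
      (((r + r') - ‖β • (n1a - n2a) + (1 - β) • (n1b - n2b)‖) /
        Real.sqrt (β ^ 2 / ρta + (1 - β) ^ 2 / ρtb)))
    (α : ℝ) (hα : α ∈ Icc (0 : ℝ) 1)
    (hne : ‖α • (n1a - n2a) + (1 - α) • (n1b - n2b)‖ ≠ 0) :
    IsGLB (collF d ρ1a ρ1b ρ2a ρ2b n1a n1b n2a n2b '' {p | collFeas d r r' α p})
      (h α ^ 2 / 2) := by
  obtain ⟨hα0, hα1⟩ := hα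
  have hα1' : (0:ℝ) ≤ 1 - α := by linarith
  obtain ⟨R, hR⟩ : ∃ x : ℝ, x = r + r' := ⟨_, rfl⟩
  obtain ⟨nb, hnb⟩ : ∃ x : EuclideanSpace ℝ (Fin d),
      x = α • (n1a - n2a) + (1 - α) • (n1b - n2b) := ⟨_, rfl⟩
  rw [← hnb] at hne
  obtain ⟨N, hNdef⟩ : ∃ x : ℝ, x = ‖nb‖ := ⟨_, rfl⟩
  rw [← hNdef] at hne
  have hN : 0 < N := by
    rw [hNdef] at hne ⊢
    exact lt_of_le_of_ne (norm_nonneg nb) (Ne.symm hne)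
  obtain ⟨S, hS⟩ : ∃ x : ℝ,
      x = α ^ 2 * (ρ1a⁻¹ + ρ2a⁻¹) + (1 - α) ^ 2 * (ρ1b⁻¹ + ρ2b⁻¹) := ⟨_, rfl⟩
  have hA : (0:ℝ) < ρ1a⁻¹ + ρ2a⁻¹ := by positivity
  have hB : (0:ℝ) < ρ1b⁻¹ + ρ2b⁻¹ := by positivity
  have hS0 : 0 < S := by
    rcases eq_or_ne α 0 with h0 | h0
    · have hSe : S = ρ1b⁻¹ + ρ2b⁻¹ := by rw [hS, h0]; ring
      rw [hSe]; exact hB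
    · have hα2 : 0 < α ^ 2 := pow_two_pos_of_ne_zero h0
      rw [hS]
      nlinarith [mul_pos hα2 hA, mul_nonneg (sq_nonneg (1 - α)) hB.le]
  have hfac : α ^ 2 / ρ1a + α ^ 2 / ρ2a + (1 - α) ^ 2 / ρ1b + (1 - α) ^ 2 / ρ2b = S := by
    rw [hS]; ring
  have hSr : α ^ 2 / ρta + (1 - α) ^ 2 / ρtb = S := by
    rw [hρta, hρtb, hS]
    simp only [div_eq_mul_inv, inv_inv]
  have hsqS0 : 0 < Real.sqrt S := Real.sqrt_pos.mpr hS0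
  obtain ⟨m0, hm0⟩ : ∃ x : ℝ, x = max 0 (R - N) := ⟨_, rfl⟩
  have hm0' : 0 ≤ m0 := hm0 ▸ le_max_left _ _
  have hhα : h α = m0 / Real.sqrt S := by
    have hhh := hh α
    rw [← hnb, ← hNdef, ← hR, hSr] at hhh
    rw [hhh, hm0]
    rcases le_total (R - N) 0 with hc | hc
    · rw [max_eq_left hc, max_eq_left, zero_div]
      exact div_nonpos_of_nonpos_of_nonneg hc hsqS0.le
    · rw [max_eq_right hc, max_eq_right]
      exact div_nonneg hc hsqS0.le
  have hval : h α ^ 2 / 2 = m0 ^ 2 / (2 * S) := by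
    rw [hhα, div_pow, Real.sq_sqrt hS0.le, div_div, mul_comm S 2]
  -- the lower bound
  have lb : ∀ y ∈ collF d ρ1a ρ1b ρ2a ρ2b n1a n1b n2a n2b '' {p | collFeas d r r' α p},
      h α ^ 2 / 2 ≤ y := by
    rintro y ⟨p, hp, rfl⟩
    simp only [mem_setOf_eq, collFeas] at hp
    obtain ⟨u, hu⟩ : ∃ x : EuclideanSpace ℝ (Fin d),
        x = α • (p.1 - p.2.2.1) + (1 - α) • (p.2.1 - p.2.2.2) := ⟨_, rfl⟩
    rw [← hu, ← hR] at hp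
    have hdiff : u - nb =
        (α • (p.1 - n1a) - α • (p.2.2.1 - n2a)) +
          ((1 - α) • (p.2.1 - n1b) - (1 - α) • (p.2.2.2 - n2b)) := by
      rw [hu, hnb]; module
    have hmax : m0 ≤ ‖u - nb‖ := by
      rw [hm0]
      refine max_le (norm_nonneg _) ?_
      have h1 := norm_sub_norm_le u nb
      rw [← hNdef] at h1
      linarith
    have htri : ‖u - nb‖ ≤
        (α * ‖p.1 - n1a‖ + α * ‖p.2.2.1 - n2a‖) +
          ((1 - α) * ‖p.2.1 - n1b‖ + (1 - α) * ‖p.2.2.2 - n2b‖) := by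
      rw [hdiff]
      refine (norm_add_le _ _).trans (add_le_add ?_ ?_)
      · refine (norm_sub_le _ _).trans (le_of_eq ?_)
        rw [norm_smul, norm_smul, Real.norm_eq_abs, abs_of_nonneg hα0]
      · refine (norm_sub_le _ _).trans (le_of_eq ?_)
        rw [norm_smul, norm_smul, Real.norm_eq_abs, abs_of_nonneg hα1']
    obtain ⟨q1, hq1⟩ : ∃ x : ℝ, x = ‖p.1 - n1a‖ := ⟨_, rfl⟩
    obtain ⟨q2, hq2⟩ : ∃ x : ℝ, x = ‖p.2.1 - n1b‖ := ⟨_, rfl⟩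
    obtain ⟨q3, hq3⟩ : ∃ x : ℝ, x = ‖p.2.2.1 - n2a‖ := ⟨_, rfl⟩
    obtain ⟨q4, hq4⟩ : ∃ x : ℝ, x = ‖p.2.2.2 - n2b‖ := ⟨_, rfl⟩
    obtain ⟨w, hw⟩ : ∃ x : ℝ, x = ‖u - nb‖ := ⟨_, rfl⟩
    have hq1' : 0 ≤ q1 := hq1 ▸ norm_nonneg _
    have hq2' : 0 ≤ q2 := hq2 ▸ norm_nonneg _
    have hq3' : 0 ≤ q3 := hq3 ▸ norm_nonneg _
    have hq4' : 0 ≤ q4 := hq4 ▸ norm_nonneg _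
    have hw' : 0 ≤ w := hw ▸ norm_nonneg _
    rw [← hw] at hmax
    rw [← hw, ← hq1, ← hq2, ← hq3, ← hq4] at htri
    have s1 : Real.sqrt ρ1a ≠ 0 := (Real.sqrt_pos.mpr hρ1a).ne'
    have s2 : Real.sqrt ρ2a ≠ 0 := (Real.sqrt_pos.mpr hρ2a).ne'
    have s3 : Real.sqrt ρ1b ≠ 0 := (Real.sqrt_pos.mpr hρ1b).ne'
    have s4 : Real.sqrt ρ2b ≠ 0 := (Real.sqrt_pos.mpr hρ2b).ne'
    have e1 : ∀ c t s : ℝ, s ≠ 0 → c / s * (s * t) = c * t := by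
      intro c t s hs; field_simp
    have e2 : ∀ c ρ : ℝ, 0 ≤ ρ → (c / Real.sqrt ρ) ^ 2 = c ^ 2 / ρ := by
      intro c ρ hρ; rw [div_pow, Real.sq_sqrt hρ]
    have e3 : ∀ t ρ : ℝ, 0 ≤ ρ → (Real.sqrt ρ * t) ^ 2 = ρ * t ^ 2 := by
      intro t ρ hρ; rw [mul_pow, Real.sq_sqrt hρ]
    have c1 := cs4 (α / Real.sqrt ρ1a) (α / Real.sqrt ρ2a)
        ((1 - α) / Real.sqrt ρ1b) ((1 - α) / Real.sqrt ρ2b)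
        (Real.sqrt ρ1a * q1) (Real.sqrt ρ2a * q3)
        (Real.sqrt ρ1b * q2) (Real.sqrt ρ2b * q4)
    rw [e1 _ _ _ s1, e1 _ _ _ s2, e1 _ _ _ s3, e1 _ _ _ s4,
        e2 _ _ hρ1a.le, e2 _ _ hρ2a.le, e2 _ _ hρ1b.le, e2 _ _ hρ2b.le,
        e3 _ _ hρ1a.le, e3 _ _ hρ2a.le, e3 _ _ hρ1b.le, e3 _ _ hρ2b.le, hfac] at c1
    have h1 : m0 ^ 2 ≤ w ^ 2 := pow_le_pow_left₀ hm0' hmax 2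
    have h2 : w ^ 2 ≤
        ((α * q1 + α * q3) + ((1 - α) * q2 + (1 - α) * q4)) ^ 2 :=
      pow_le_pow_left₀ hw' htri 2
    rw [hval]
    simp only [collF]
    rw [← hq1, ← hq2, ← hq3, ← hq4]
    rw [div_le_iff₀ (by positivity : (0:ℝ) < 2 * S)]
    linarith only [h1, h2, c1]
  -- the minimizer
  have hNS : (0:ℝ) < N * S := mul_pos hN hS0
  obtain ⟨t0, ht0⟩ : ∃ x : ℝ, x = m0 / (N * S) := ⟨_, rfl⟩
  have ht0' : 0 ≤ t0 := ht0 ▸ div_nonneg hm0' hNS.le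
  refine IsLeast.isGLB ⟨⟨(n1a + (α / ρ1a) • (t0 • nb), n1b + ((1 - α) / ρ1b) • (t0 • nb),
      n2a - (α / ρ2a) • (t0 • nb), n2b - ((1 - α) / ρ2b) • (t0 • nb)), ?_, ?_⟩, lb⟩
  · simp only [mem_setOf_eq, collFeas]
    rw [← hR]
    have hveq : α • ((n1a + (α / ρ1a) • (t0 • nb)) - (n2a - (α / ρ2a) • (t0 • nb))) +
        (1 - α) • ((n1b + ((1 - α) / ρ1b) • (t0 • nb)) - (n2b - ((1 - α) / ρ2b) • (t0 • nb)))
        = (1 + S * t0) • nb := by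
      rw [hS, hnb]; module
    rw [hveq, norm_smul, Real.norm_eq_abs,
      abs_of_nonneg (by linarith [mul_nonneg hS0.le ht0'] : (0:ℝ) ≤ 1 + S * t0), ← hNdef]
    have hst : S * t0 * N = m0 := by
      rw [ht0]; field_simp
    have hRN : R ≤ N + m0 := by
      rcases le_total (R - N) 0 with hc | hc
      · have hm : m0 = 0 := by rw [hm0]; exact max_eq_left hc
        linarith
      · have hm : m0 = R - N := by rw [hm0]; exact max_eq_right hc
        linarith
    linarith only [hst, hRN]
  · show collF d ρ1a ρ1b ρ2a ρ2b n1a n1b n2a n2b _ = h α ^ 2 / 2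
    rw [hval]
    simp only [collF]
    rw [add_sub_cancel_left, add_sub_cancel_left, sub_sub_cancel_left, sub_sub_cancel_left,
      norm_neg, norm_neg]
    have hnl : ∀ c : ℝ, ‖c • (t0 • nb)‖ ^ 2 = c ^ 2 * (t0 ^ 2 * N ^ 2) := by
      intro c
      rw [norm_smul, norm_smul, Real.norm_eq_abs, Real.norm_eq_abs, mul_pow, mul_pow,
        sq_abs, sq_abs, ← hNdef]
    rw [hnl, hnl, hnl, hnl, ht0]
    exact collval ρ1a ρ1b ρ2a ρ2b N m0 α S hρ1a hρ1b hρ2a hρ2b hne hS0 hfac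
end

section
/- Fix α ∈ [0,1] with ‖αΔna + (1 − α)Δnb‖ ≠ 0, and set s = α²/ρ̃a + (1 − α)²/ρ̃b, λ = −h(α)/(2(r + r′)√s), and γ = 2λ/(1 + 2λs). Then the unique minimizer of the single-constraint problem P(α) is given by x1a* = n1a − (γ/ρ1a)(α²Δna + α(1 − α)Δnb), x2a* = n2a + (γ/ρ2a)(α²Δna + α(1 − α)Δnb), x1b* = n1b − (γ/ρ1b)(α(1 − α)Δna + (1 − α)²Δnb), and x2b* = n2b + (γ/ρ2b)(α(1 − α)Δna + (1 − α)²Δnb). -/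
/-!
Write `L = collSep α : (ℝᵈ)⁴ → ℝᵈ`, `‖·‖_ρ` for the `ρ`-weighted norm on `(ℝᵈ)⁴` and `R = r + r'`,
so that `F p = ½ ‖p - n‖²_ρ` and the constraint reads `R ≤ ‖L p‖`. The weighted adjoint
`L* = collAdj` satisfies `L L* = s`, and Cauchy–Schwarz gives `‖L δ‖² ≤ s ‖δ‖²_ρ`.

The candidate is `x = n - γ L* v` with `v = L n`, so `L x = (1 - γ s) v`, and the formula for `γ`
amounts to `1 - γ s = max 1 (R / ‖v‖)`: `x = n` if `n` is feasible, and otherwise `x` lies on the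
constraint boundary. Expanding the square, `F (x + δ) = F x + ½ ‖δ‖²_ρ - γ ⟪v, L δ⟫`. Here `γ ≤ 0`,
and squaring the constraint at `x + δ` bounds `⟪v, L δ⟫` below by `-‖v‖ ‖L δ‖² / (2R)`; with
Cauchy–Schwarz the excess `F (x + δ) - F x` is at least `min 1 (‖v‖ / R) · ½ ‖δ‖²_ρ`.
-/

open Set

open scoped RealInnerProductSpace

theorem two_mul_div_one_add_mul_mul_eq_min {R N s lam : ℝ} (hR : 0 < R) (hN : 0 < N) (hs : 0 < s)
    (hlam : lam = -max 0 ((R - N) / √s) / (2 * R * √s)) :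
    2 * lam / (1 + 2 * lam * s) * s * N = min 0 (N - R) := by
  rcases le_or_gt R N with hfar | hnear
  · rw [max_eq_left (div_nonpos_of_nonpos_of_nonneg (by linarith) (Real.sqrt_nonneg s))] at hlam
    simp [hlam, min_eq_left (by linarith : 0 ≤ N - R)]
  · rw [max_eq_right (div_nonneg (by linarith) (Real.sqrt_nonneg s))] at hlam
    have hsqrt := Real.sq_sqrt hs.le
    have h2lam : 2 * lam * s = (N - R) / R := by
      rw [hlam]; field_simp; rw [hsqrt]; ring
    have hden : 1 + 2 * lam * s = N / R := by rw [h2lam]; field_simp; ring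
    rw [min_eq_right (by linarith), hden]
    calc 2 * lam / (N / R) * s * N = 2 * lam * s * R := by field_simp
      _ = N - R := by rw [h2lam]; field_simp

noncomputable def collS (ρ1a ρ1b ρ2a ρ2b α : ℝ) : ℝ :=
  α ^ 2 * (ρ1a⁻¹ + ρ2a⁻¹) + (1 - α) ^ 2 * (ρ1b⁻¹ + ρ2b⁻¹)

theorem collS_pos {ρ1a ρ1b ρ2a ρ2b : ℝ} (hρ1a : 0 < ρ1a) (hρ1b : 0 < ρ1b) (hρ2a : 0 < ρ2a)
    (hρ2b : 0 < ρ2b) (α : ℝ) : 0 < collS ρ1a ρ1b ρ2a ρ2b α := by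
  unfold collS
  rcases eq_or_ne α 0 with rfl | hα <;> positivity

section InnerProductSpace

variable {E : Type*} [NormedAddCommGroup E] [InnerProductSpace ℝ E]

theorem norm_smul_add_smul_sq_le {p q : ℝ} (hp : 0 < p) (hq : 0 < q) (a b : ℝ) (x y : E) :
    ‖a • x + b • y‖ ^ 2 ≤ (a ^ 2 / p + b ^ 2 / q) * (p * ‖x‖ ^ 2 + q * ‖y‖ ^ 2) := by
  have htri : ‖a • x + b • y‖ ≤ |a| * ‖x‖ + |b| * ‖y‖ := by
    simpa only [norm_smul, Real.norm_eq_abs] using norm_add_le (a • x) (b • y)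
  have hcs : (|a| * ‖x‖ + |b| * ‖y‖) ^ 2 * (p * q) ≤
      (a ^ 2 * q + b ^ 2 * p) * (p * ‖x‖ ^ 2 + q * ‖y‖ ^ 2) := by
    rw [← sq_abs a, ← sq_abs b]
    linear_combination sq_nonneg (|a| * q * ‖y‖ - |b| * p * ‖x‖)
  calc ‖a • x + b • y‖ ^ 2 ≤ (|a| * ‖x‖ + |b| * ‖y‖) ^ 2 := by gcongr
    _ ≤ (a ^ 2 / p + b ^ 2 / q) * (p * ‖x‖ ^ 2 + q * ‖y‖ ^ 2) := by
      rw [div_add_div _ _ hp.ne' hq.ne', div_mul_eq_mul_div, le_div_iff₀ (by positivity)]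
      linarith

theorem le_norm_one_sub_mul_smul {R s γ : ℝ} {v : E} (hv : 0 < ‖v‖)
    (hγ : γ * s * ‖v‖ = min 0 (‖v‖ - R)) : R ≤ ‖(1 - γ * s) • v‖ := by
  have hγs : γ * s ≤ 0 := by
    by_contra! h
    nlinarith [min_le_left 0 (‖v‖ - R)]
  rw [norm_smul, Real.norm_eq_abs, abs_of_nonneg (by linarith), sub_mul, one_mul, hγ]
  linarith [min_le_right 0 (‖v‖ - R)]

theorem min_one_div_mul_le_sub_mul_inner {R s γ D : ℝ} {v w : E} (hR : 0 < R) (hs : 0 < s)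
    (hv : 0 < ‖v‖) (hγ : γ * s * ‖v‖ = min 0 (‖v‖ - R)) (hw : ‖w‖ ^ 2 ≤ 2 * s * D)
    (hfeas : R ≤ ‖(1 - γ * s) • v + w‖) :
    min 1 (‖v‖ / R) * D ≤ D - γ * ⟪v, w⟫ := by
  have hD : 0 ≤ D := by nlinarith [sq_nonneg ‖w‖]
  rcases le_or_gt R ‖v‖ with hfar | hnear
  · have hγ0 : γ = 0 := by
      rw [min_eq_left (by linarith)] at hγ
      simpa [hs.ne', hv.ne'] using hγ
    rw [hγ0, zero_mul, sub_zero]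
    exact mul_le_of_le_one_left hD (min_le_left _ _)
  · rw [min_eq_right (by linarith)] at hγ
    rw [min_eq_right ((div_le_one hR).mpr hnear.le), div_mul_eq_mul_div, div_le_iff₀ hR]
    have hcoef : 1 - γ * s = R / ‖v‖ := by field_simp; linarith
    -- squaring the constraint: `w` cannot point far into the ball of radius `R`
    have htangent : 0 ≤ 2 * R * ⟪v, w⟫ + ‖v‖ * ‖w‖ ^ 2 := by
      have hsq := pow_le_pow_left₀ hR.le (hcoef ▸ hfeas) 2
      rw [norm_add_sq_real, norm_smul, Real.norm_eq_abs, abs_of_pos (by positivity),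
        real_inner_smul_left, div_mul_cancel₀ _ hv.ne'] at hsq
      have hRv : R / ‖v‖ * ⟪v, w⟫ * ‖v‖ = R * ⟪v, w⟫ := by field_simp
      nlinarith
    have hbound : 0 ≤ s * ‖v‖ * D + R * ⟪v, w⟫ := by nlinarith
    have hfactor : ((D - γ * ⟪v, w⟫) * R - ‖v‖ * D) * (s * ‖v‖) =
        (R - ‖v‖) * (s * ‖v‖ * D + R * ⟪v, w⟫) := by
      linear_combination (-(R * ⟪v, w⟫)) * hγ
    have : 0 ≤ ((D - γ * ⟪v, w⟫) * R - ‖v‖ * D) * (s * ‖v‖) := by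
      rw [hfactor]; exact mul_nonneg (by linarith) hbound
    exact sub_nonneg.mp (nonneg_of_mul_nonneg_left this (by positivity))

def collSep (α : ℝ) (p : E × E × E × E) : E :=
  α • (p.1 - p.2.2.1) + (1 - α) • (p.2.1 - p.2.2.2)

noncomputable def collAdj (ρ1a ρ1b ρ2a ρ2b α : ℝ) (v : E) : E × E × E × E :=
  ((α / ρ1a) • v, ((1 - α) / ρ1b) • v, -((α / ρ2a) • v), -(((1 - α) / ρ2b) • v))

theorem collSep_add (α : ℝ) (p q : E × E × E × E) :
    collSep α (p + q) = collSep α p + collSep α q := by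
  simp only [collSep, Prod.fst_add, Prod.snd_add]
  module

theorem collSep_sub_smul_collAdj (ρ1a ρ1b ρ2a ρ2b α γ : ℝ) (p : E × E × E × E) (v : E) :
    collSep α (p - γ • collAdj ρ1a ρ1b ρ2a ρ2b α v) =
      collSep α p - (γ * collS ρ1a ρ1b ρ2a ρ2b α) • v := by
  simp only [collSep, collAdj, collS, Prod.fst_sub, Prod.snd_sub, Prod.smul_fst, Prod.smul_snd]
  module

theorem collSep_sub_smul_collAdj_collSep (ρ1a ρ1b ρ2a ρ2b α γ : ℝ) (p : E × E × E × E) :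
    collSep α (p - γ • collAdj ρ1a ρ1b ρ2a ρ2b α (collSep α p)) =
      (1 - γ * collS ρ1a ρ1b ρ2a ρ2b α) • collSep α p := by
  rw [collSep_sub_smul_collAdj]; module

end InnerProductSpace

section EuclideanSpace

variable {d : ℕ} {ρ1a ρ1b ρ2a ρ2b : ℝ} {n1a n1b n2a n2b : EuclideanSpace ℝ (Fin d)}
  {x q : EuclideanSpace ℝ (Fin d) × EuclideanSpace ℝ (Fin d) ×
    EuclideanSpace ℝ (Fin d) × EuclideanSpace ℝ (Fin d)}

theorem collF_sub_smul_collAdj_add (hρ1a : ρ1a ≠ 0) (hρ1b : ρ1b ≠ 0) (hρ2a : ρ2a ≠ 0)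
    (hρ2b : ρ2b ≠ 0) {v : EuclideanSpace ℝ (Fin d)} {α γ : ℝ}
    (hx : x = (n1a, n1b, n2a, n2b) - γ • collAdj ρ1a ρ1b ρ2a ρ2b α v)
    (δ : EuclideanSpace ℝ (Fin d) × EuclideanSpace ℝ (Fin d) ×
      EuclideanSpace ℝ (Fin d) × EuclideanSpace ℝ (Fin d)) :
    collF d ρ1a ρ1b ρ2a ρ2b n1a n1b n2a n2b (x + δ) =
      collF d ρ1a ρ1b ρ2a ρ2b n1a n1b n2a n2b x +
        (collF d ρ1a ρ1b ρ2a ρ2b 0 0 0 0 δ - γ * ⟪v, collSep α δ⟫) := by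
  obtain ⟨δ1a, δ1b, δ2a, δ2b⟩ := δ
  subst hx
  simp only [collF, collAdj, collSep, Prod.fst_add, Prod.snd_add, Prod.fst_sub, Prod.snd_sub,
    Prod.smul_fst, Prod.smul_snd, sub_zero, add_sub_right_comm, sub_sub_cancel_left]
  simp only [norm_add_sq_real, norm_neg, inner_neg_left, inner_smul_left, inner_add_right,
    inner_sub_right, inner_smul_right, RCLike.conj_to_real]
  field_simp
  ring

theorem norm_collSep_sq_le (hρ1a : 0 < ρ1a) (hρ1b : 0 < ρ1b) (hρ2a : 0 < ρ2a) (hρ2b : 0 < ρ2b)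
    (α : ℝ) (δ : EuclideanSpace ℝ (Fin d) × EuclideanSpace ℝ (Fin d) ×
      EuclideanSpace ℝ (Fin d) × EuclideanSpace ℝ (Fin d)) :
    ‖collSep α δ‖ ^ 2 ≤ 2 * collS ρ1a ρ1b ρ2a ρ2b α * collF d ρ1a ρ1b ρ2a ρ2b 0 0 0 0 δ := by
  obtain ⟨δ1a, δ1b, δ2a, δ2b⟩ := δ
  have hpair : ∀ {p q : ℝ}, 0 < p → 0 < q → ∀ x y : EuclideanSpace ℝ (Fin d),
      (p⁻¹ + q⁻¹)⁻¹ * ‖x - y‖ ^ 2 ≤ p * ‖x‖ ^ 2 + q * ‖y‖ ^ 2 := by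
    intro p q hp hq x y
    have := norm_smul_add_smul_sq_le hp hq 1 (-1) x y
    rw [one_smul, neg_one_smul, ← sub_eq_add_neg] at this
    rw [inv_mul_le_iff₀ (by positivity)]
    simpa [div_eq_mul_inv] using this
  have hta : 0 < (ρ1a⁻¹ + ρ2a⁻¹)⁻¹ := by positivity
  have htb : 0 < (ρ1b⁻¹ + ρ2b⁻¹)⁻¹ := by positivity
  calc ‖collSep α (δ1a, δ1b, δ2a, δ2b)‖ ^ 2
      ≤ collS ρ1a ρ1b ρ2a ρ2b α * ((ρ1a⁻¹ + ρ2a⁻¹)⁻¹ * ‖δ1a - δ2a‖ ^ 2 +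
          (ρ1b⁻¹ + ρ2b⁻¹)⁻¹ * ‖δ1b - δ2b‖ ^ 2) := by
        simpa only [collSep, collS, div_eq_mul_inv, inv_inv] using
          norm_smul_add_smul_sq_le hta htb α (1 - α) (δ1a - δ2a) (δ1b - δ2b)
    _ ≤ collS ρ1a ρ1b ρ2a ρ2b α * ((ρ1a * ‖δ1a‖ ^ 2 + ρ2a * ‖δ2a‖ ^ 2) +
          (ρ1b * ‖δ1b‖ ^ 2 + ρ2b * ‖δ2b‖ ^ 2)) := by
        gcongr ?_ * ?_
        · exact (collS_pos hρ1a hρ1b hρ2a hρ2b α).le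
        · exact add_le_add (hpair hρ1a hρ2a _ _) (hpair hρ1b hρ2b _ _)
    _ = 2 * collS ρ1a ρ1b ρ2a ρ2b α * collF d ρ1a ρ1b ρ2a ρ2b 0 0 0 0 (δ1a, δ1b, δ2a, δ2b) := by
        simp only [collF, sub_zero]; ring

theorem collF_zero_pos (hρ1a : 0 < ρ1a) (hρ1b : 0 < ρ1b) (hρ2a : 0 < ρ2a) (hρ2b : 0 < ρ2b)
    {δ : EuclideanSpace ℝ (Fin d) × EuclideanSpace ℝ (Fin d) ×
      EuclideanSpace ℝ (Fin d) × EuclideanSpace ℝ (Fin d)} (hδ : δ ≠ 0) :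
    0 < collF d ρ1a ρ1b ρ2a ρ2b 0 0 0 0 δ := by
  obtain ⟨δ1a, δ1b, δ2a, δ2b⟩ := δ
  have hne : δ1a ≠ 0 ∨ δ1b ≠ 0 ∨ δ2a ≠ 0 ∨ δ2b ≠ 0 := by
    by_contra! h
    obtain ⟨rfl, rfl, rfl, rfl⟩ := h
    exact hδ rfl
  simp only [collF, sub_zero]
  rcases hne with h | h | h | h <;> have := norm_pos_iff.mpr h <;> positivity

theorem min_one_div_mul_collF_le_collF_sub_collF (hρ1a : 0 < ρ1a) (hρ1b : 0 < ρ1b)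
    (hρ2a : 0 < ρ2a) (hρ2b : 0 < ρ2b) {r r' α γ : ℝ} (hR : 0 < r + r')
    (hv : 0 < ‖collSep α (n1a, n1b, n2a, n2b)‖)
    (hγ : γ * collS ρ1a ρ1b ρ2a ρ2b α * ‖collSep α (n1a, n1b, n2a, n2b)‖ =
      min 0 (‖collSep α (n1a, n1b, n2a, n2b)‖ - (r + r')))
    (hx : x = (n1a, n1b, n2a, n2b) -
      γ • collAdj ρ1a ρ1b ρ2a ρ2b α (collSep α (n1a, n1b, n2a, n2b)))
    (hq : collFeas d r r' α q) :
    min 1 (‖collSep α (n1a, n1b, n2a, n2b)‖ / (r + r')) * collF d ρ1a ρ1b ρ2a ρ2b 0 0 0 0 (q - x) ≤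
      collF d ρ1a ρ1b ρ2a ρ2b n1a n1b n2a n2b q - collF d ρ1a ρ1b ρ2a ρ2b n1a n1b n2a n2b x := by
  have hsplit := collF_sub_smul_collAdj_add hρ1a.ne' hρ1b.ne' hρ2a.ne' hρ2b.ne' hx (q - x)
  rw [add_sub_cancel] at hsplit
  rw [hsplit, add_sub_cancel_left]
  refine min_one_div_mul_le_sub_mul_inner hR (collS_pos hρ1a hρ1b hρ2a hρ2b α) hv hγ
    (norm_collSep_sq_le hρ1a hρ1b hρ2a hρ2b α (q - x)) ?_
  rw [← collSep_sub_smul_collAdj_collSep, ← hx, ← collSep_add, add_sub_cancel]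
  exact hq

end EuclideanSpace

theorem stmt_5_general
    (d : ℕ)
    (n1a n1b n2a n2b : EuclideanSpace ℝ (Fin d))
    (ρ1a ρ1b ρ2a ρ2b : ℝ)
    (hρ1a : 0 < ρ1a) (hρ1b : 0 < ρ1b) (hρ2a : 0 < ρ2a) (hρ2b : 0 < ρ2b)
    (r r' : ℝ) (hr : 0 < r) (hr' : 0 < r')
    (ρta ρtb : ℝ) (hρta : ρta = (ρ1a⁻¹ + ρ2a⁻¹)⁻¹) (hρtb : ρtb = (ρ1b⁻¹ + ρ2b⁻¹)⁻¹)
    (h : ℝ → ℝ)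
    (hh : ∀ β : ℝ, h β = max 0
      (((r + r') - ‖β • (n1a - n2a) + (1 - β) • (n1b - n2b)‖) /
        Real.sqrt (β ^ 2 / ρta + (1 - β) ^ 2 / ρtb)))
    (α : ℝ)
    (hne : ‖α • (n1a - n2a) + (1 - α) • (n1b - n2b)‖ ≠ 0)
    (s lam γ : ℝ)
    (hs : s = α ^ 2 / ρta + (1 - α) ^ 2 / ρtb)
    (hlam : lam = -h α / (2 * (r + r') * Real.sqrt s))
    (hγ : γ = 2 * lam / (1 + 2 * lam * s))
    (x1a x1b x2a x2b : EuclideanSpace ℝ (Fin d))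
    (hx1a : x1a = n1a - (γ / ρ1a) •
      ((α ^ 2) • (n1a - n2a) + (α * (1 - α)) • (n1b - n2b)))
    (hx2a : x2a = n2a + (γ / ρ2a) •
      ((α ^ 2) • (n1a - n2a) + (α * (1 - α)) • (n1b - n2b)))
    (hx1b : x1b = n1b - (γ / ρ1b) •
      ((α * (1 - α)) • (n1a - n2a) + ((1 - α) ^ 2) • (n1b - n2b)))
    (hx2b : x2b = n2b + (γ / ρ2b) •
      ((α * (1 - α)) • (n1a - n2a) + ((1 - α) ^ 2) • (n1b - n2b))) :
    collFeas d r r' α (x1a, x1b, x2a, x2b) ∧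
      (∀ q, collFeas d r r' α q →
        collF d ρ1a ρ1b ρ2a ρ2b n1a n1b n2a n2b (x1a, x1b, x2a, x2b) ≤
          collF d ρ1a ρ1b ρ2a ρ2b n1a n1b n2a n2b q) ∧
      (∀ q, collFeas d r r' α q → q ≠ (x1a, x1b, x2a, x2b) →
        collF d ρ1a ρ1b ρ2a ρ2b n1a n1b n2a n2b (x1a, x1b, x2a, x2b) <
          collF d ρ1a ρ1b ρ2a ρ2b n1a n1b n2a n2b q) := by
  set v := collSep α (n1a, n1b, n2a, n2b)
  have hv : 0 < ‖v‖ := (norm_nonneg _).lt_of_ne' hne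
  have hR : 0 < r + r' := add_pos hr hr'
  have hsS : s = collS ρ1a ρ1b ρ2a ρ2b α := by
    simp only [hs, hρta, hρtb, collS, div_eq_mul_inv, inv_inv]
  have hγs : γ * s * ‖v‖ = min 0 (‖v‖ - (r + r')) := by
    rw [hγ]
    exact two_mul_div_one_add_mul_mul_eq_min hR hv (hsS ▸ collS_pos hρ1a hρ1b hρ2a hρ2b α)
      (by rw [hlam, hh, hs]; rfl)
  set x := (x1a, x1b, x2a, x2b)
  have hx : x = (n1a, n1b, n2a, n2b) - γ • collAdj ρ1a ρ1b ρ2a ρ2b α v := by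
    simp only [x, hx1a, hx1b, hx2a, hx2b, v, collSep, collAdj, Prod.smul_mk, Prod.mk_sub_mk,
      Prod.mk.injEq]
    refine ⟨?_, ?_, ?_, ?_⟩ <;> module
  rw [hsS] at hγs
  have hlt : ∀ q, collFeas d r r' α q → q ≠ x →
      collF d ρ1a ρ1b ρ2a ρ2b n1a n1b n2a n2b x < collF d ρ1a ρ1b ρ2a ρ2b n1a n1b n2a n2b q :=
    fun q hq hqx => sub_pos.mp <| (mul_pos (lt_min one_pos (div_pos hv hR))
      (collF_zero_pos hρ1a hρ1b hρ2a hρ2b (sub_ne_zero.mpr hqx))).trans_le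
        (min_one_div_mul_collF_le_collF_sub_collF hρ1a hρ1b hρ2a hρ2b hR hv hγs hx hq)
  refine ⟨?_, fun q hq => ?_, hlt⟩
  · show r + r' ≤ ‖collSep α x‖
    rw [hx, collSep_sub_smul_collAdj_collSep]
    exact le_norm_one_sub_mul_smul hv hγs
  · rcases eq_or_ne q x with rfl | hqx
    · exact le_rfl
    · exact (hlt q hq hqx).le

/-- Closed-form expression for the unique minimizer of the single-constraint
problem `P(α)` when `‖α Δna + (1-α) Δnb‖ ≠ 0`. -/
theorem stmt_5
    (d : ℕ) (hd : 1 ≤ d)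
    (n1a n1b n2a n2b : EuclideanSpace ℝ (Fin d))
    (ρ1a ρ1b ρ2a ρ2b : ℝ)
    (hρ1a : 0 < ρ1a) (hρ1b : 0 < ρ1b) (hρ2a : 0 < ρ2a) (hρ2b : 0 < ρ2b)
    (r r' : ℝ) (hr : 0 < r) (hr' : 0 < r')
    (ρta ρtb : ℝ) (hρta : ρta = (ρ1a⁻¹ + ρ2a⁻¹)⁻¹) (hρtb : ρtb = (ρ1b⁻¹ + ρ2b⁻¹)⁻¹)
    (h : ℝ → ℝ)
    (hh : ∀ β : ℝ, h β = max 0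
      (((r + r') - ‖β • (n1a - n2a) + (1 - β) • (n1b - n2b)‖) /
        Real.sqrt (β ^ 2 / ρta + (1 - β) ^ 2 / ρtb)))
    (α : ℝ) (hα : α ∈ Icc (0 : ℝ) 1)
    (hne : ‖α • (n1a - n2a) + (1 - α) • (n1b - n2b)‖ ≠ 0)
    (s lam γ : ℝ)
    (hs : s = α ^ 2 / ρta + (1 - α) ^ 2 / ρtb)
    (hlam : lam = -h α / (2 * (r + r') * Real.sqrt s))
    (hγ : γ = 2 * lam / (1 + 2 * lam * s))
    (x1a x1b x2a x2b : EuclideanSpace ℝ (Fin d))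
    (hx1a : x1a = n1a - (γ / ρ1a) •
      ((α ^ 2) • (n1a - n2a) + (α * (1 - α)) • (n1b - n2b)))
    (hx2a : x2a = n2a + (γ / ρ2a) •
      ((α ^ 2) • (n1a - n2a) + (α * (1 - α)) • (n1b - n2b)))
    (hx1b : x1b = n1b - (γ / ρ1b) •
      ((α * (1 - α)) • (n1a - n2a) + ((1 - α) ^ 2) • (n1b - n2b)))
    (hx2b : x2b = n2b + (γ / ρ2b) •
      ((α * (1 - α)) • (n1a - n2a) + ((1 - α) ^ 2) • (n1b - n2b))) :
    collFeas d r r' α (x1a, x1b, x2a, x2b) ∧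
      (∀ q, collFeas d r r' α q →
        collF d ρ1a ρ1b ρ2a ρ2b n1a n1b n2a n2b (x1a, x1b, x2a, x2b) ≤
          collF d ρ1a ρ1b ρ2a ρ2b n1a n1b n2a n2b q) ∧
      (∀ q, collFeas d r r' α q → q ≠ (x1a, x1b, x2a, x2b) →
        collF d ρ1a ρ1b ρ2a ρ2b n1a n1b n2a n2b (x1a, x1b, x2a, x2b) <
          collF d ρ1a ρ1b ρ2a ρ2b n1a n1b n2a n2b q) :=
  stmt_5_general d n1a n1b n2a n2b ρ1a ρ1b ρ2a ρ2b hρ1a hρ1b hρ2a hρ2b r r' hr hr' ρta ρtb hρta hρtb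
    h hh α hne s lam γ hs hlam hγ x1a x1b x2a x2b hx1a hx2a hx1b hx2b
end

section
/- Let α* ∈ [0,1] satisfy h(α*) ≥ h(α) for all α ∈ [0,1], and suppose ‖α*Δna + (1 − α*)Δnb‖ ≠ 0. Then the unique minimizer x*(α*) of the single-constraint problem P(α*) is also a minimizer of the semi-infinite problem SIP: x*(α*) satisfies ‖α(x1a* − x2a*) + (1 − α)(x1b* − x2b*)‖ ≥ r + r′ for every α ∈ [0,1], and F(x*(α*)) ≤ F(x) for every x ∈ (ℝ^d)⁴ satisfying these constraints for all α ∈ [0,1]. -/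
open Set

open RealInnerProductSpace
section AuxLemmas
variable {E : Type*} [NormedAddCommGroup E] [InnerProductSpace ℝ E]

lemma aux_split (ρ1 ρ2 : ℝ) (h1 : 0 < ρ1) (h2 : 0 < ρ2) (y1 y2 : E) :
    (ρ1⁻¹ + ρ2⁻¹)⁻¹ / 2 * ‖y1 - y2‖ ^ 2 ≤ ρ1 / 2 * ‖y1‖ ^ 2 + ρ2 / 2 * ‖y2‖ ^ 2 := by
  have e1 : ‖y1 - y2‖ ^ 2 = ‖y1‖ ^ 2 - 2 * ⟪y1, y2⟫ + ‖y2‖ ^ 2 := norm_sub_sq_real y1 y2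
  have e2 : (0:ℝ) ≤ ρ1 ^ 2 * ‖y1‖ ^ 2 + 2 * (ρ1 * ρ2) * ⟪y1, y2⟫ + ρ2 ^ 2 * ‖y2‖ ^ 2 := by
    have h3 : (0:ℝ) ≤ ‖ρ1 • y1 + ρ2 • y2‖ ^ 2 := sq_nonneg _
    rw [norm_add_sq_real, norm_smul, norm_smul, real_inner_smul_left,
      real_inner_smul_right, Real.norm_eq_abs, Real.norm_eq_abs,
      abs_of_pos h1, abs_of_pos h2] at h3
    nlinarith [h3]
  have hinv : (ρ1⁻¹ + ρ2⁻¹)⁻¹ = ρ1 * ρ2 / (ρ1 + ρ2) := by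
    field_simp
    ring
  have hpos : (0:ℝ) < ρ1 + ρ2 := by linarith
  rw [hinv, e1, div_div, div_mul_eq_mul_div, div_le_iff₀ (by positivity)]
  nlinarith [e2]

lemma aux_quad (ρa ρb α D : ℝ) (ha : 0 < ρa) (hb : 0 < ρb)
    (hD : D = α ^ 2 / ρa + (1 - α) ^ 2 / ρb) (hD0 : D ≠ 0)
    (za zb lam : E) (hlam : lam = α • za + (1 - α) • zb) :
    ρa / 2 * ‖za‖ ^ 2 + ρb / 2 * ‖zb‖ ^ 2
      = ‖lam‖ ^ 2 / (2 * D) + ρa / 2 * ‖za - (α / (ρa * D)) • lam‖ ^ 2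
        + ρb / 2 * ‖zb - ((1 - α) / (ρb * D)) • lam‖ ^ 2 := by
  have ha0 : ρa ≠ 0 := ne_of_gt ha
  have hb0 : ρb ≠ 0 := ne_of_gt hb
  have hL : ‖lam‖ ^ 2 = α * ⟪za, lam⟫ + (1-α) * ⟪zb, lam⟫ := by
    rw [← real_inner_self_eq_norm_sq]
    nth_rewrite 1 [hlam]
    rw [inner_add_left, real_inner_smul_left, real_inner_smul_left]
  have ea : ‖za - (α / (ρa * D)) • lam‖ ^ 2
      = ‖za‖^2 - 2*(α/(ρa*D))*⟪za,lam⟫ + (α/(ρa*D))^2 * ‖lam‖^2 := by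
    rw [norm_sub_sq_real, real_inner_smul_right, norm_smul, Real.norm_eq_abs,
      mul_pow, sq_abs]; ring
  have eb : ‖zb - ((1-α) / (ρb * D)) • lam‖ ^ 2
      = ‖zb‖^2 - 2*((1-α)/(ρb*D))*⟪zb,lam⟫ + ((1-α)/(ρb*D))^2 * ‖lam‖^2 := by
    rw [norm_sub_sq_real, real_inner_smul_right, norm_smul, Real.norm_eq_abs,
      mul_pow, sq_abs]; ring
  rw [ea, eb]
  linear_combination (norm := (field_simp; ring))
    (-(1:ℝ)/D) * hL + (‖lam‖^2/(2*D^2)) * hD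

lemma aux_Dpos (ρa ρb β : ℝ) (ha : 0 < ρa) (hb : 0 < ρb) :
    0 < β ^ 2 / ρa + (1 - β) ^ 2 / ρb := by
  rcases eq_or_ne β 0 with h | h
  · subst h
    have h1 : (0:ℝ) ≤ 0 ^ 2 / ρa := by positivity
    have h2 : (0:ℝ) < (1 - 0) ^ 2 / ρb := by norm_num; positivity
    linarith
  · have h1 : 0 < β ^ 2 / ρa := div_pos (by positivity) ha
    have h2 : 0 ≤ (1 - β) ^ 2 / ρb := by positivity
    linarith

lemma aux_norm_le_of_sq_le {a b : ℝ} (h : a ^ 2 ≤ b ^ 2) (ha : 0 ≤ a) (hb : 0 ≤ b) :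
    a ≤ b := by nlinarith

end AuxLemmas
lemma aux_coef (t αstar ρ1a ρ2a ρ1b ρ2b Dst : ℝ)
    (hD : Dst ≠ 0)
    (hsum : αstar^2*(ρ1a⁻¹+ρ2a⁻¹) + (1-αstar)^2*(ρ1b⁻¹+ρ2b⁻¹) = Dst) :
    αstar*(t*αstar/(ρ1a*Dst)+t*αstar/(ρ2a*Dst))
      + (1-αstar)*(t*(1-αstar)/(ρ1b*Dst)+t*(1-αstar)/(ρ2b*Dst)) = t := by
  have e : αstar*(t*αstar/(ρ1a*Dst)+t*αstar/(ρ2a*Dst))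
      + (1-αstar)*(t*(1-αstar)/(ρ1b*Dst)+t*(1-αstar)/(ρ2b*Dst))
      = t*Dst⁻¹*(αstar^2*(ρ1a⁻¹+ρ2a⁻¹) + (1-αstar)^2*(ρ1b⁻¹+ρ2b⁻¹)) := by ring
  rw [e, hsum, mul_assoc, inv_mul_cancel₀ hD, mul_one]

lemma aux_F0 (t αstar ρ1a ρ2a ρ1b ρ2b Dst : ℝ)
    (h1a : ρ1a ≠ 0) (h2a : ρ2a ≠ 0) (h1b : ρ1b ≠ 0) (h2b : ρ2b ≠ 0) (hD : Dst ≠ 0)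
    (hsum : αstar^2*(ρ1a⁻¹+ρ2a⁻¹) + (1-αstar)^2*(ρ1b⁻¹+ρ2b⁻¹) = Dst) :
    ρ1a/2*(t*αstar/(ρ1a*Dst))^2 + ρ1b/2*(t*(1-αstar)/(ρ1b*Dst))^2
      + ρ2a/2*(t*αstar/(ρ2a*Dst))^2 + ρ2b/2*(t*(1-αstar)/(ρ2b*Dst))^2 = t^2/(2*Dst) := by
  have e : ∀ ρ y : ℝ, ρ ≠ 0 → ρ/2*(y/(ρ*Dst))^2 = y^2*ρ⁻¹*(Dst⁻¹)^2/2 := by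
    intro ρ y hρ
    field_simp
  rw [e _ _ h1a, e _ _ h1b, e _ _ h2a, e _ _ h2b]
  have e2 : (t*αstar)^2*ρ1a⁻¹*(Dst⁻¹)^2/2 + (t*(1-αstar))^2*ρ1b⁻¹*(Dst⁻¹)^2/2
      + (t*αstar)^2*ρ2a⁻¹*(Dst⁻¹)^2/2 + (t*(1-αstar))^2*ρ2b⁻¹*(Dst⁻¹)^2/2
      = t^2*Dst⁻¹*(Dst⁻¹*(αstar^2*(ρ1a⁻¹+ρ2a⁻¹) + (1-αstar)^2*(ρ1b⁻¹+ρ2b⁻¹)))/2 := by ring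
  rw [e2, hsum, inv_mul_cancel₀ hD]
  ring

lemma aux_coefα (t α αstar ρta ρtb Dst : ℝ) (hD : Dst ≠ 0)
    (hsum2 : αstar^2*ρta⁻¹ + (1-αstar)^2*ρtb⁻¹ = Dst) :
    α*(t*αstar/(ρta*Dst)) + (1-α)*(t*(1-αstar)/(ρtb*Dst))
      = t + t*(α-αstar)*((αstar/ρta - (1-αstar)/ρtb)/Dst) := by
  have e : α*(t*αstar/(ρta*Dst)) + (1-α)*(t*(1-αstar)/(ρtb*Dst))
      = t*Dst⁻¹*(αstar^2*ρta⁻¹ + (1-αstar)^2*ρtb⁻¹)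
        + t*Dst⁻¹*((α-αstar)*(αstar*ρta⁻¹ - (1-αstar)*ρtb⁻¹)) := by ring
  rw [e, hsum2, mul_assoc, inv_mul_cancel₀ hD, mul_one]
  ring

lemma aux_DsEq (s β0 αstar ρta ρtb Dst κ E2b : ℝ) (hD : Dst ≠ 0)
    (hsum2 : αstar^2*ρta⁻¹ + (1-αstar)^2*ρtb⁻¹ = Dst)
    (hκ : κ = β0*((αstar/ρta - (1-αstar)/ρtb)/Dst))
    (hE : E2b = β0^2*(ρta⁻¹+ρtb⁻¹)) :
    (αstar+s*β0)^2/ρta + (1-(αstar+s*β0))^2/ρtb = Dst*(1+2*s*κ) + s^2*E2b := by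
  have hκD : Dst*κ = β0*(αstar*ρta⁻¹ - (1-αstar)*ρtb⁻¹) := by
    rw [hκ]
    have e : Dst*(β0*((αstar/ρta - (1-αstar)/ρtb)/Dst))
        = (Dst*Dst⁻¹)*(β0*(αstar*ρta⁻¹ - (1-αstar)*ρtb⁻¹)) := by ring
    rw [e, mul_inv_cancel₀ hD, one_mul]
  have h1 : (αstar+s*β0)^2/ρta + (1-(αstar+s*β0))^2/ρtb
      = (αstar^2*ρta⁻¹ + (1-αstar)^2*ρtb⁻¹)
        + 2*s*(β0*(αstar*ρta⁻¹ - (1-αstar)*ρtb⁻¹)) + s^2*(β0^2*(ρta⁻¹+ρtb⁻¹)) := by ring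
  rw [h1, hsum2, ← hκD, ← hE]
  ring

lemma aux_contra (N t Dst Ds ms P κ nd2 E2b s ε0 : ℝ)
    (hN : 0 < N) (ht : 0 < t) (hDst : 0 < Dst) (hDs : 0 < Ds)
    (hnd2 : 0 ≤ nd2) (hE2b : 0 ≤ E2b) (hms0 : 0 ≤ ms)
    (hms2 : ms^2 = N^2 + 2*s*(N*P) + s^2*nd2)
    (hDsEq : Ds = Dst*(1+2*s*κ) + s^2*E2b)
    (hs0 : 0 < s)
    (hsP : s*(|P| + nd2/(2*N) + 1) ≤ N/2)
    (hsκ : s*(|κ| + E2b/(2*Dst) + 1) ≤ 1/2)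
    (hsK : s*((nd2/(2*N) + t*(E2b/(2*Dst))) + 1) ≤ ε0)
    (hε : ε0 < -(P + t*κ)) (hε0 : 0 < ε0) :
    t/Real.sqrt Dst < (N + t - ms)/Real.sqrt Ds := by
  set Q := nd2/(2*N) with hQ
  set c₂ := E2b/(2*Dst) with hc₂
  have hQ0 : 0 ≤ Q := div_nonneg hnd2 (by linarith)
  have hc₂0 : 0 ≤ c₂ := div_nonneg hE2b (by linarith)
  have h2NQ : 2*N*Q = nd2 := by rw [hQ]; field_simp
  have h2Dc : 2*Dst*c₂ = E2b := by rw [hc₂]; field_simp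
  have habsP := neg_abs_le P
  have habsκ := neg_abs_le κ
  have hsP' : s*(-|P|) ≤ s*P := mul_le_mul_of_nonneg_left habsP hs0.le
  have hsκ' : s*(-|κ|) ≤ s*κ := mul_le_mul_of_nonneg_left habsκ hs0.le
  have hsQ : 0 ≤ s*Q := mul_nonneg hs0.le hQ0
  have hsc₂ : 0 ≤ s*c₂ := mul_nonneg hs0.le hc₂0
  have hs2Q : 0 ≤ s^2*Q := mul_nonneg (sq_nonneg s) hQ0
  have hs2c₂ : 0 ≤ s^2*c₂ := mul_nonneg (sq_nonneg s) hc₂0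
  have hMs0 : 0 < N + s*P + s^2*Q := by linarith only [hsP, hsP', hs2Q, hsQ, hs0, hN]
  have h2NQs : 2*N*Q*s^2 = nd2*s^2 := by rw [h2NQ]
  have hmsq : ms^2 ≤ (N + s*P + s^2*Q)^2 := by
    have e : (N + s*P + s^2*Q)^2 - ms^2 = (s*P + s^2*Q)^2 := by
      linear_combination -hms2 + h2NQs
    linarith only [e, sq_nonneg (s*P + s^2*Q)]
  have hmsMs : ms ≤ N + s*P + s^2*Q := aux_norm_le_of_sq_le hmsq hms0 hMs0.le
  have h1κ : (0:ℝ) < 1 + s*κ + s^2*c₂ := by linarith only [hsκ, hsκ', hs2c₂, hsc₂, hs0]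
  have h2Dcs : 2*Dst*c₂*s^2 = E2b*s^2 := by rw [h2Dc]
  have hDq : Ds ≤ Dst*(1+s*κ+s^2*c₂)^2 := by
    have e : Dst*(1+s*κ+s^2*c₂)^2 - Ds = Dst*(s*κ + s^2*c₂)^2 := by
      linear_combination -hDsEq + h2Dcs
    linarith only [e, mul_nonneg hDst.le (sq_nonneg (s*κ + s^2*c₂))]
  have hsqrt : Real.sqrt Ds ≤ Real.sqrt Dst * (1+s*κ+s^2*c₂) := by
    calc Real.sqrt Ds ≤ Real.sqrt (Dst*(1+s*κ+s^2*c₂)^2) := Real.sqrt_le_sqrt hDq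
      _ = Real.sqrt Dst * (1+s*κ+s^2*c₂) := by
          rw [Real.sqrt_mul hDst.le, Real.sqrt_sq h1κ.le]
  have hA : s*(Q + t*c₂) < ε0 := by linarith only [hsK, hs0]
  have hB : 0 < -(P + t*κ) - s*(Q + t*c₂) := by linarith
  have hC : 0 < s*(-(P + t*κ) - s*(Q + t*c₂)) := mul_pos hs0 hB
  have hmain : t*(1+s*κ+s^2*c₂) < t - s*P - s^2*Q := by linarith only [hC]
  have hsqDst : 0 < Real.sqrt Dst := Real.sqrt_pos.mpr hDst
  have hsqDs : 0 < Real.sqrt Ds := Real.sqrt_pos.mpr hDs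
  rw [div_lt_div_iff₀ hsqDst hsqDs]
  calc t*Real.sqrt Ds ≤ t*(Real.sqrt Dst * (1+s*κ+s^2*c₂)) :=
        mul_le_mul_of_nonneg_left hsqrt ht.le
    _ = t*(1+s*κ+s^2*c₂)*Real.sqrt Dst := by ring
    _ < (t - s*P - s^2*Q)*Real.sqrt Dst := mul_lt_mul_of_pos_right hmain hsqDst
    _ ≤ (N + t - ms)*Real.sqrt Dst := by
        apply mul_le_mul_of_nonneg_right _ hsqDst.le
        linarith
set_option maxHeartbeats 1000000 in
set_option maxRecDepth 8000 in
/-- If `α*` maximizes `h` over `[0,1]` and `‖α* Δna + (1-α*) Δnb‖ ≠ 0`, then the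
(unique) minimizer of `P(α*)` is also a minimizer of the semi-infinite problem. -/
theorem stmt_6
    (d : ℕ) (hd : 1 ≤ d)
    (n1a n1b n2a n2b : EuclideanSpace ℝ (Fin d))
    (ρ1a ρ1b ρ2a ρ2b : ℝ)
    (hρ1a : 0 < ρ1a) (hρ1b : 0 < ρ1b) (hρ2a : 0 < ρ2a) (hρ2b : 0 < ρ2b)
    (r r' : ℝ) (hr : 0 < r) (hr' : 0 < r')
    (ρta ρtb : ℝ) (hρta : ρta = (ρ1a⁻¹ + ρ2a⁻¹)⁻¹) (hρtb : ρtb = (ρ1b⁻¹ + ρ2b⁻¹)⁻¹)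
    (h : ℝ → ℝ)
    (hh : ∀ β : ℝ, h β = max 0
      (((r + r') - ‖β • (n1a - n2a) + (1 - β) • (n1b - n2b)‖) /
        Real.sqrt (β ^ 2 / ρta + (1 - β) ^ 2 / ρtb)))
    (αstar : ℝ) (hαstar : αstar ∈ Icc (0 : ℝ) 1)
    (hmax : ∀ α ∈ Icc (0 : ℝ) 1, h α ≤ h αstar)
    (hne : ‖αstar • (n1a - n2a) + (1 - αstar) • (n1b - n2b)‖ ≠ 0) :
    ∀ p : EuclideanSpace ℝ (Fin d) × EuclideanSpace ℝ (Fin d) ×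
        EuclideanSpace ℝ (Fin d) × EuclideanSpace ℝ (Fin d),
      collFeas d r r' αstar p →
      (∀ q, collFeas d r r' αstar q →
        collF d ρ1a ρ1b ρ2a ρ2b n1a n1b n2a n2b p ≤
          collF d ρ1a ρ1b ρ2a ρ2b n1a n1b n2a n2b q) →
      (∀ α ∈ Icc (0 : ℝ) 1, collFeas d r r' α p) ∧
        ∀ q, (∀ α ∈ Icc (0 : ℝ) 1, collFeas d r r' α q) →
          collF d ρ1a ρ1b ρ2a ρ2b n1a n1b n2a n2b p ≤
            collF d ρ1a ρ1b ρ2a ρ2b n1a n1b n2a n2b q := by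
  obtain ⟨hα0, hα1⟩ := hαstar
  intro p hfeas hopt
  refine ⟨?_, fun q hq => hopt q (hq αstar ⟨hα0, hα1⟩)⟩
  -- setup
  have hρta0 : 0 < ρta := by
    rw [hρta]
    have h1 := inv_pos.mpr hρ1a
    have h2 := inv_pos.mpr hρ2a
    exact inv_pos.mpr (by linarith)
  have hρtb0 : 0 < ρtb := by
    rw [hρtb]
    have h1 := inv_pos.mpr hρ1b
    have h2 := inv_pos.mpr hρ2b
    exact inv_pos.mpr (by linarith)
  set R := r + r' with hRdef
  have hR0 : 0 < R := by rw [hRdef]; linarith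
  set Δa := n1a - n2a with hΔa
  set Δb := n1b - n2b with hΔb
  set wst := αstar • Δa + (1 - αstar) • Δb with hwst
  set N := ‖wst‖ with hNdef
  have hN : 0 < N := lt_of_le_of_ne (norm_nonneg wst) (Ne.symm hne)
  set Dst := αstar ^ 2 / ρta + (1 - αstar) ^ 2 / ρtb with hDst
  have hDst0 : 0 < Dst := by rw [hDst]; exact aux_Dpos ρta ρtb αstar hρta0 hρtb0
  set t := R - N with htdef
  clear_value R Δa Δb wst N Dst t
  by_cases hts : t ≤ 0
  · -- Case 1 : the nominal point is feasible
    have hq0feas : collFeas d r r' αstar (n1a, n1b, n2a, n2b) := by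
      simp only [collFeas]
      rw [← hΔa, ← hΔb, ← hwst, ← hNdef, ← hRdef]
      linarith
    have hFple : ρ1a / 2 * ‖p.1 - n1a‖ ^ 2 + ρ1b / 2 * ‖p.2.1 - n1b‖ ^ 2 +
        ρ2a / 2 * ‖p.2.2.1 - n2a‖ ^ 2 + ρ2b / 2 * ‖p.2.2.2 - n2b‖ ^ 2 ≤ 0 := by
      have h1 := hopt (n1a, n1b, n2a, n2b) hq0feas
      simp only [collF, sub_self, norm_zero] at h1
      simpa using h1
    have hzero : ∀ (ρ : ℝ), 0 < ρ → ∀ x y : EuclideanSpace ℝ (Fin d),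
        ρ / 2 * ‖x - y‖ ^ 2 = 0 → x = y := by
      intro ρ hρ x y hxy
      have h2 : ‖x - y‖ ^ 2 = 0 :=
        (mul_eq_zero.mp hxy).resolve_left (by intro hc; linarith)
      have h3 : ‖x - y‖ = 0 := by
        have := sq_eq_zero_iff.mp h2
        exact this
      rw [norm_eq_zero, sub_eq_zero] at h3
      exact h3
    have e1 : (0:ℝ) ≤ ρ1a / 2 * ‖p.1 - n1a‖ ^ 2 := by
      exact mul_nonneg (by linarith) (sq_nonneg _)
    have e2 : (0:ℝ) ≤ ρ1b / 2 * ‖p.2.1 - n1b‖ ^ 2 := by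
      exact mul_nonneg (by linarith) (sq_nonneg _)
    have e3 : (0:ℝ) ≤ ρ2a / 2 * ‖p.2.2.1 - n2a‖ ^ 2 := by
      exact mul_nonneg (by linarith) (sq_nonneg _)
    have e4 : (0:ℝ) ≤ ρ2b / 2 * ‖p.2.2.2 - n2b‖ ^ 2 := by
      exact mul_nonneg (by linarith) (sq_nonneg _)
    have hp1 : p.1 = n1a := hzero ρ1a hρ1a _ _ (by linarith)
    have hp2 : p.2.1 = n1b := hzero ρ1b hρ1b _ _ (by linarith)
    have hp3 : p.2.2.1 = n2a := hzero ρ2a hρ2a _ _ (by linarith)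
    have hp4 : p.2.2.2 = n2b := hzero ρ2b hρ2b _ _ (by linarith)
    intro α hα
    simp only [collFeas]
    rw [hp1, hp2, hp3, hp4, ← hΔa, ← hΔb, ← hRdef]
    by_contra hcon
    push_neg at hcon
    have hDα : 0 < α ^ 2 / ρta + (1 - α) ^ 2 / ρtb := aux_Dpos ρta ρtb α hρta0 hρtb0
    have hsq : 0 < Real.sqrt (α ^ 2 / ρta + (1 - α) ^ 2 / ρtb) := Real.sqrt_pos.mpr hDα
    have hpos : 0 < (R - ‖α • Δa + (1 - α) • Δb‖) / Real.sqrt (α ^ 2 / ρta + (1 - α) ^ 2 / ρtb) :=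
      div_pos (by linarith) hsq
    have hhα : (R - ‖α • Δa + (1 - α) • Δb‖) / Real.sqrt (α ^ 2 / ρta + (1 - α) ^ 2 / ρtb) ≤ h α := by
      rw [hh α]
      exact le_max_right _ _
    have hhst : h αstar = 0 := by
      rw [hh αstar, ← hwst, ← hNdef, ← hDst]
      apply max_eq_left
      apply div_nonpos_of_nonpos_of_nonneg (by linarith) (Real.sqrt_nonneg _)
    have := hmax α hα
    rw [hhst] at this
    linarith
  · -- Case 2
    push_neg at hts
    -- the unit vector
    set u := N⁻¹ • wst with hu
    have hu1 : ‖u‖ = 1 := by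
      rw [hu, norm_smul, Real.norm_eq_abs, abs_inv, abs_of_pos hN, ← hNdef]
      field_simp
    have hNu : N • u = wst := by
      rw [hu, smul_smul, mul_inv_cancel₀ hN.ne', one_smul]
    have huu : ⟪u, u⟫ = 1 := by
      rw [real_inner_self_eq_norm_sq, hu1]; norm_num
    have hsum : αstar^2*(ρ1a⁻¹+ρ2a⁻¹) + (1-αstar)^2*(ρ1b⁻¹+ρ2b⁻¹) = Dst := by
      rw [hDst, hρta, hρtb, division_def, division_def, inv_inv, inv_inv]
    -- the explicit minimizer p₀
    set c1 := t*αstar/(ρ1a*Dst) with hc1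
    set c2 := t*(1-αstar)/(ρ1b*Dst) with hc2
    set c3 := t*αstar/(ρ2a*Dst) with hc3
    set c4 := t*(1-αstar)/(ρ2b*Dst) with hc4
    clear_value u c1 c2 c3 c4
    have hcoef : αstar*(c1+c3) + (1-αstar)*(c2+c4) = t := by
      rw [hc1, hc2, hc3, hc4]
      exact aux_coef t αstar ρ1a ρ2a ρ1b ρ2b Dst hDst0.ne' hsum
    have hvec0 : αstar • ((n1a + c1 • u) - (n2a - c3 • u))
        + (1 - αstar) • ((n1b + c2 • u) - (n2b - c4 • u)) = R • u := by
      have hst : αstar • ((n1a + c1 • u) - (n2a - c3 • u))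
          + (1 - αstar) • ((n1b + c2 • u) - (n2b - c4 • u))
          = (αstar • Δa + (1 - αstar) • Δb) + (αstar*(c1+c3) + (1-αstar)*(c2+c4)) • u := by
        rw [hΔa, hΔb]; module
      rw [hst, hcoef, ← hwst, ← hNu]
      have hRNt : R = N + t := by rw [htdef]; ring
      rw [hRNt]; module
    have hfeas0 : collFeas d r r' αstar (n1a + c1 • u, n1b + c2 • u, n2a - c3 • u, n2b - c4 • u) := by
      simp only [collFeas]
      rw [← hRdef]
      rw [hvec0, norm_smul, hu1, Real.norm_eq_abs, abs_of_pos hR0, mul_one]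
    have hF0 : collF d ρ1a ρ1b ρ2a ρ2b n1a n1b n2a n2b
        (n1a + c1 • u, n1b + c2 • u, n2a - c3 • u, n2b - c4 • u) = t^2/(2*Dst) := by
      simp only [collF]
      rw [add_sub_cancel_left, add_sub_cancel_left, sub_sub_cancel_left, sub_sub_cancel_left,
        norm_neg, norm_neg, norm_smul, norm_smul, norm_smul, norm_smul, hu1]
      simp only [Real.norm_eq_abs, mul_one, sq_abs]
      rw [hc1, hc2, hc3, hc4]
      exact aux_F0 t αstar ρ1a ρ2a ρ1b ρ2b Dst hρ1a.ne' hρ2a.ne' hρ1b.ne' hρ2b.ne' hDst0.ne' hsum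
    have hFp : collF d ρ1a ρ1b ρ2a ρ2b n1a n1b n2a n2b p ≤ t^2/(2*Dst) := by
      rw [← hF0]; exact hopt _ hfeas0
    -- differences of the minimizer
    set za := (p.1 - n1a) - (p.2.2.1 - n2a) with hza
    set zb := (p.2.1 - n1b) - (p.2.2.2 - n2b) with hzb
    set lam := αstar • za + (1 - αstar) • zb with hlam
    clear_value za zb lam
    have hsa : ρta/2*‖za‖^2 ≤ ρ1a/2*‖p.1 - n1a‖^2 + ρ2a/2*‖p.2.2.1 - n2a‖^2 := by
      have := aux_split ρ1a ρ2a hρ1a hρ2a (p.1 - n1a) (p.2.2.1 - n2a)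
      rw [← hρta] at this
      rw [hza]
      exact this
    have hsb : ρtb/2*‖zb‖^2 ≤ ρ1b/2*‖p.2.1 - n1b‖^2 + ρ2b/2*‖p.2.2.2 - n2b‖^2 := by
      have := aux_split ρ1b ρ2b hρ1b hρ2b (p.2.1 - n1b) (p.2.2.2 - n2b)
      rw [← hρtb] at this
      rw [hzb]
      exact this
    have hquad := aux_quad ρta ρtb αstar Dst hρta0 hρtb0 hDst hDst0.ne' za zb lam hlam
    have hEa : 0 ≤ ρta/2*‖za - (αstar/(ρta*Dst)) • lam‖^2 :=
      mul_nonneg (by linarith) (sq_nonneg _)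
    have hEb : 0 ≤ ρtb/2*‖zb - ((1-αstar)/(ρtb*Dst)) • lam‖^2 :=
      mul_nonneg (by linarith) (sq_nonneg _)
    have hwp : αstar • (p.1 - p.2.2.1) + (1 - αstar) • (p.2.1 - p.2.2.2) = wst + lam := by
      rw [hlam, hza, hzb, hwst, hΔa, hΔb]; module
    have hfeas' : R ≤ ‖wst + lam‖ := by
      have h1 := hfeas
      simp only [collFeas] at h1
      rw [← hRdef, hwp] at h1
      exact h1
    have hlamt : t ≤ ‖lam‖ := by
      have h1 := norm_add_le wst lam
      rw [← hNdef] at h1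
      rw [htdef]
      linarith only [h1, hfeas']
    have hFlow : ‖lam‖^2/(2*Dst) + ρta/2*‖za - (αstar/(ρta*Dst)) • lam‖^2
        + ρtb/2*‖zb - ((1-αstar)/(ρtb*Dst)) • lam‖^2 ≤ t^2/(2*Dst) := by
      simp only [collF] at hFp
      linarith only [hquad, hsa, hsb, hFp]
    have hlamle : ‖lam‖ ≤ t := by
      have h1 : ‖lam‖^2/(2*Dst) ≤ t^2/(2*Dst) := by linarith only [hFlow, hEa, hEb]
      have h2 : ‖lam‖^2 ≤ t^2 := by
        have h2D : (0:ℝ) < 2*Dst := by linarith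
        exact (div_le_div_iff_of_pos_right h2D).mp h1
      exact aux_norm_le_of_sq_le h2 (norm_nonneg _) hts.le
    have hlameq : ‖lam‖ = t := le_antisymm hlamle hlamt
    have hl2 : ‖lam‖^2 = t^2 := by rw [hlameq]
    rw [hl2] at hFlow
    have hEa0 : ρta/2*‖za - (αstar/(ρta*Dst)) • lam‖^2 = 0 := by linarith only [hFlow, hEa, hEb]
    have hEb0 : ρtb/2*‖zb - ((1-αstar)/(ρtb*Dst)) • lam‖^2 = 0 := by linarith only [hFlow, hEa, hEb]
    have hzero2 : ∀ (ρ : ℝ), 0 < ρ → ∀ x : EuclideanSpace ℝ (Fin d),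
        ρ/2*‖x‖^2 = 0 → x = 0 := by
      intro ρ hρ x hx
      have h2 : ‖x‖^2 = 0 := (mul_eq_zero.mp hx).resolve_left (by intro hc; linarith)
      rw [sq_eq_zero_iff, norm_eq_zero] at h2
      exact h2
    have hza_eq : za = (αstar/(ρta*Dst)) • lam := by
      have := hzero2 ρta hρta0 _ hEa0
      rwa [sub_eq_zero] at this
    have hzb_eq : zb = ((1-αstar)/(ρtb*Dst)) • lam := by
      have := hzero2 ρtb hρtb0 _ hEb0
      rwa [sub_eq_zero] at this
    -- triangle equality : lam = t • u
    have hwpR : ‖wst + lam‖ = R := by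
      have h1 : ‖wst + lam‖ ≤ N + ‖lam‖ := by
        have := norm_add_le wst lam
        rwa [← hNdef] at this
      have h2 : N + ‖lam‖ = R := by rw [hlameq, htdef]; ring
      linarith only [h1, h2, hfeas']
    have hinner : ⟪wst, lam⟫ = N * t := by
      have h1 : ‖wst + lam‖^2 = R^2 := by rw [hwpR]
      rw [norm_add_sq_real, ← hNdef, hlameq] at h1
      have hRNt : R = N + t := by rw [htdef]; ring
      rw [hRNt] at h1
      linear_combination h1/2
    have hlamu : lam = t • u := by
      have h0 : ‖lam - t • u‖^2 = 0 := by
        rw [norm_sub_sq_real, real_inner_smul_right, norm_smul, hlameq, hu1,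
          Real.norm_eq_abs, hu, real_inner_smul_right, real_inner_comm, hinner]
        rw [mul_pow, sq_abs, inv_mul_cancel_left₀ hN.ne']
        ring
      rw [sq_eq_zero_iff, norm_eq_zero, sub_eq_zero] at h0
      exact h0
    have hza2 : za = (t*αstar/(ρta*Dst)) • u := by
      rw [hza_eq, hlamu, smul_smul]
      congr 1
      ring
    have hzb2 : zb = (t*(1-αstar)/(ρtb*Dst)) • u := by
      rw [hzb_eq, hlamu, smul_smul]
      congr 1
      ring
    have hva : p.1 - p.2.2.1 = Δa + (t*αstar/(ρta*Dst)) • u := by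
      have h1 : p.1 - p.2.2.1 = Δa + za := by rw [hza, hΔa]; module
      rw [h1, hza2]
    have hvb : p.2.1 - p.2.2.2 = Δb + (t*(1-αstar)/(ρtb*Dst)) • u := by
      have h1 : p.2.1 - p.2.2.2 = Δb + zb := by rw [hzb, hΔb]; module
      rw [h1, hzb2]
    -- now prove feasibility for every α
    intro α hα
    obtain ⟨ha0', ha1'⟩ := hα
    simp only [collFeas]
    rw [← hRdef]
    by_contra hcon
    push_neg at hcon
    have hsum2 : αstar^2*ρta⁻¹ + (1-αstar)^2*ρtb⁻¹ = Dst := by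
      rw [hDst]; ring
    have hRNt : R = N + t := by rw [htdef]; ring
    set β0 := α - αstar with hβ0
    set κh := (αstar/ρta - (1-αstar)/ρtb)/Dst with hκh
    set v := (Δa - Δb) + (t*κh) • u with hv
    have hcoefα : α*(t*αstar/(ρta*Dst)) + (1-α)*(t*(1-αstar)/(ρtb*Dst)) = t + t*β0*κh := by
      rw [hβ0, hκh]
      exact aux_coefα t α αstar ρta ρtb Dst hDst0.ne' hsum2
    have hV : α • (p.1 - p.2.2.1) + (1 - α) • (p.2.1 - p.2.2.2) = R • u + β0 • v := by
      rw [hva, hvb]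
      have hstep : α • (Δa + (t*αstar/(ρta*Dst)) • u) + (1-α) • (Δb + (t*(1-αstar)/(ρtb*Dst)) • u)
          = (αstar • Δa + (1-αstar) • Δb) + β0 • (Δa - Δb)
            + (α*(t*αstar/(ρta*Dst)) + (1-α)*(t*(1-αstar)/(ρtb*Dst))) • u := by
        rw [hβ0]; module
      rw [hstep, hcoefα, ← hwst, ← hNu, hv, hRNt]
      module
    rw [hV] at hcon
    have hRu2 : ‖R • u + β0 • v‖^2 < R^2 :=
      pow_lt_pow_left₀ hcon (norm_nonneg _) (by norm_num)
    have hexp : ‖R • u + β0 • v‖^2 = R^2 + 2*R*(β0*⟪u,v⟫) + β0^2*‖v‖^2 := by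
      rw [norm_add_sq_real, real_inner_smul_left, real_inner_smul_right, norm_smul, norm_smul,
        hu1, Real.norm_eq_abs, Real.norm_eq_abs, mul_pow, mul_pow, sq_abs, sq_abs]
      ring
    have hkey : 2*R*(β0*⟪u,v⟫) + β0^2*‖v‖^2 < 0 := by
      rw [hexp] at hRu2
      linarith only [hRu2]
    have huv : ⟪u,v⟫ = ⟪u, Δa - Δb⟫ + t*κh := by
      rw [hv, inner_add_right, real_inner_smul_right, huu]
      ring
    set P := β0*⟪u, Δa - Δb⟫ with hP
    set κ := β0*κh with hκ2
    set nd2 := β0^2*‖Δa - Δb‖^2 with hnd2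
    set E2b := β0^2*(ρta⁻¹+ρtb⁻¹) with hE2b
    have hnd20 : 0 ≤ nd2 := by rw [hnd2]; positivity
    have hE2b0 : 0 ≤ E2b := by
      rw [hE2b]
      have h1 : 0 ≤ ρta⁻¹ := (inv_pos.mpr hρta0).le
      have h2 : 0 ≤ ρtb⁻¹ := (inv_pos.mpr hρtb0).le
      have h3 : (0:ℝ) ≤ β0^2 := sq_nonneg β0
      exact mul_nonneg h3 (by linarith)
    have hgform : β0*⟪u,v⟫ = P + t*κ := by rw [huv, hP, hκ2]; ring
    set ε0 := (β0^2*‖v‖^2)/(2*R) with hε0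
    have hε0R : ε0*(2*R) = β0^2*‖v‖^2 := by
      rw [hε0, div_mul_cancel₀ _ (show (2*R) ≠ 0 from ne_of_gt (by linarith only [hR0]))]
    have hεneg : ε0 < -(P + t*κ) := by
      rw [hgform] at hkey
      have hX : (2*R) * (ε0 + (P + t*κ)) < (2*R) * 0 := by
        rw [mul_zero]
        have e : (2*R) * (ε0 + (P + t*κ)) = ε0*(2*R) + 2*R*(P + t*κ) := by ring
        rw [e, hε0R]
        linarith only [hkey]
      have := lt_of_mul_lt_mul_left (a := 2*R) (by linarith only [hX] : (2*R)*(ε0 + (P + t*κ)) < (2*R)*0) (by linarith only [hR0])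
      linarith only [this]
    have hvpos : 0 < β0^2*‖v‖^2 := by
      by_contra hc
      push_neg at hc
      have h00 : β0^2*‖v‖^2 = 0 := le_antisymm hc (by positivity)
      have habs : |β0 * ⟪u,v⟫| ≤ |β0| * ‖v‖ := by
        calc |β0 * ⟪u,v⟫| = |β0| * |⟪u,v⟫| := abs_mul _ _
          _ ≤ |β0| * (‖u‖*‖v‖) :=
              mul_le_mul_of_nonneg_left (abs_real_inner_le_norm u v) (abs_nonneg _)
          _ = |β0| * ‖v‖ := by rw [hu1, one_mul]
      have hsq0 : (|β0| * ‖v‖)^2 = 0 := by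
        rw [mul_pow, sq_abs]
        exact h00
      have h0' : |β0| * ‖v‖ = 0 := by
        have := sq_eq_zero_iff.mp hsq0
        exact this
      rw [h0'] at habs
      have hz : β0*⟪u,v⟫ = 0 := abs_eq_zero.mp (le_antisymm habs (abs_nonneg _))
      rw [hz] at hkey
      rw [h00] at hkey
      norm_num at hkey
    have hε0pos : 0 < ε0 := by
      rw [hε0]
      exact div_pos hvpos (by linarith only [hR0])
    -- choose s
    have hQc : (0:ℝ) ≤ nd2/(2*N) := div_nonneg hnd20 (by linarith only [hN])
    have hc2c : (0:ℝ) ≤ E2b/(2*Dst) := div_nonneg hE2b0 (by linarith only [hDst0])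
    have hden1 : (0:ℝ) < 2*(|P| + nd2/(2*N) + 1) := by
      have := abs_nonneg P
      linarith only [this, hQc]
    have hden2 : (0:ℝ) < 2*(|κ| + E2b/(2*Dst) + 1) := by
      have := abs_nonneg κ
      linarith only [this, hc2c]
    have hden3 : (0:ℝ) < (nd2/(2*N) + t*(E2b/(2*Dst))) + 1 := by
      have h1 : 0 ≤ t*(E2b/(2*Dst)) := mul_nonneg hts.le hc2c
      linarith only [hQc, h1]
    set s := min (min 1 (N/(2*(|P| + nd2/(2*N) + 1))))
      (min (1/(2*(|κ| + E2b/(2*Dst) + 1))) (ε0/((nd2/(2*N) + t*(E2b/(2*Dst))) + 1))) with hs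
    have hs0 : 0 < s := by
      apply lt_min
      · exact lt_min one_pos (div_pos hN hden1)
      · exact lt_min (div_pos one_pos hden2) (div_pos hε0pos hden3)
    have hs1 : s ≤ 1 := le_trans (min_le_left _ _) (min_le_left _ _)
    have hsP : s*(|P| + nd2/(2*N) + 1) ≤ N/2 := by
      have h1 : s ≤ N/(2*(|P| + nd2/(2*N) + 1)) :=
        le_trans (min_le_left _ _) (min_le_right _ _)
      rw [le_div_iff₀ hden1] at h1
      linarith only [h1]
    have hsκ : s*(|κ| + E2b/(2*Dst) + 1) ≤ 1/2 := by
      have h1 : s ≤ 1/(2*(|κ| + E2b/(2*Dst) + 1)) :=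
        le_trans (min_le_right _ _) (min_le_left _ _)
      rw [le_div_iff₀ hden2] at h1
      linarith only [h1]
    have hsK : s*((nd2/(2*N) + t*(E2b/(2*Dst))) + 1) ≤ ε0 := by
      have h1 : s ≤ ε0/((nd2/(2*N) + t*(E2b/(2*Dst))) + 1) :=
        le_trans (min_le_right _ _) (min_le_right _ _)
      rw [le_div_iff₀ hden3] at h1
      linarith only [h1]
    -- the competitor parameter
    set αs := αstar + s*β0 with hαs
    have hαsmem : αs ∈ Icc (0:ℝ) 1 := by
      have he : αs = (1-s)*αstar + s*α := by rw [hαs, hβ0]; ring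
      constructor
      · rw [he]
        have h1 : 0 ≤ (1-s)*αstar := mul_nonneg (by linarith only [hs1]) hα0
        have h2 : 0 ≤ s*α := mul_nonneg hs0.le ha0'
        linarith only [h1, h2]
      · rw [he]
        have h1 : (1-s)*αstar ≤ (1-s)*1 :=
          mul_le_mul_of_nonneg_left hα1 (by linarith only [hs1])
        have h2 : s*α ≤ s*1 := mul_le_mul_of_nonneg_left ha1' hs0.le
        linarith only [h1, h2]
    have hvecαs : αs • Δa + (1 - αs) • Δb = wst + (s*β0) • (Δa - Δb) := by
      rw [hαs, hwst]; module
    have hiw : ⟪wst, Δa - Δb⟫ = N*⟪u, Δa - Δb⟫ := by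
      rw [← hNu, real_inner_smul_left]
    have hms2 : ‖αs • Δa + (1 - αs) • Δb‖^2 = N^2 + 2*s*(N*P) + s^2*nd2 := by
      rw [hvecαs, norm_add_sq_real, real_inner_smul_right, hiw, norm_smul, ← hNdef,
        Real.norm_eq_abs, mul_pow, sq_abs, hP, hnd2]
      ring
    have hDs0 : 0 < αs^2/ρta + (1-αs)^2/ρtb := aux_Dpos ρta ρtb αs hρta0 hρtb0
    have hDsEq : αs^2/ρta + (1-αs)^2/ρtb = Dst*(1+2*s*κ) + s^2*E2b := by
      rw [hαs]
      exact aux_DsEq s β0 αstar ρta ρtb Dst κ E2b hDst0.ne' hsum2 (by rw [hκ2, hκh]) (by rw [hE2b])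
    have hcontra := aux_contra N t Dst (αs^2/ρta + (1-αs)^2/ρtb) ‖αs • Δa + (1 - αs) • Δb‖
      P κ nd2 E2b s ε0 hN hts hDst0 hDs0 hnd20 hE2b0 (norm_nonneg _) hms2 hDsEq hs0 hsP hsκ hsK
      hεneg hε0pos
    have h1 : (R - ‖αs • Δa + (1 - αs) • Δb‖)/Real.sqrt (αs^2/ρta + (1-αs)^2/ρtb) ≤ h αs := by
      rw [hh αs]
      exact le_max_right _ _
    have h2 : h αstar = t/Real.sqrt Dst := by
      rw [hh αstar, ← hwst, ← hNdef, ← hDst, ← htdef]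
      exact max_eq_right (div_nonneg hts.le (Real.sqrt_nonneg _))
    have h3 := hmax αs hαsmem
    rw [h2] at h3
    rw [hRNt] at h1
    linarith only [hcontra, h1, h3]
end

section
/- Assume Δnb ≠ 0 and ‖Δnb‖ < r + r′. Then h is (right-)differentiable at α = 0 within [0,1], and its derivative there equals √ρ̃b · ((r + r′) − ‖Δnb‖ − ⟨Δnb, Δna − Δnb⟩/‖Δnb‖). In particular, the sign of the derivative of h at 0 equals the sign of (r + r′) − ‖Δnb‖ − ⟨Δnb, Δna − Δnb⟩/‖Δnb‖. -/
/-!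
Near `α = 0` the numerator `r + r' - ‖αΔna + (1 - α)Δnb‖` is positive, so the truncation at `0`
is inactive and `h` is a smooth quotient there. The norm has derivative `⟪Δnb, Δna - Δnb⟫ / ‖Δnb‖`
at `0`, and the denominator takes the value `1/√ρ̃b` with derivative `-1/√ρ̃b`; the quotient rule
then collapses to `√ρ̃b · (numerator + its derivative)`.
-/

open Set
open scoped RealInnerProductSpace

theorem Real.sign_mul_of_pos {c : ℝ} (hc : 0 < c) (x : ℝ) : Real.sign (c * x) = Real.sign x := by
  rcases lt_trichotomy x 0 with hx | rfl | hx
  · rw [Real.sign_of_neg hx, Real.sign_of_neg (mul_neg_of_pos_of_neg hc hx)]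
  · rw [mul_zero]
  · rw [Real.sign_of_pos hx, Real.sign_of_pos (mul_pos hc hx)]

theorem HasDerivAt.max_zero_of_pos {g : ℝ → ℝ} {g' x : ℝ} (hg : HasDerivAt g g' x)
    (hx : 0 < g x) : HasDerivAt (fun t => max 0 (g t)) g' x := by
  refine hg.congr_of_eventuallyEq ?_
  filter_upwards [hg.continuousAt.eventually (lt_mem_nhds hx)] with t ht
  exact max_eq_right ht.le

theorem hasDerivAt_sqrt_sq_div_add_one_sub_sq_div (a : ℝ) {b : ℝ} (hb : 0 < b) :
    HasDerivAt (fun β : ℝ => √(β ^ 2 / a + (1 - β) ^ 2 / b)) (-(√b)⁻¹) 0 := by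
  have hq : HasDerivAt (fun β : ℝ => β ^ 2 / a + (1 - β) ^ 2 / b) (-2 / b) 0 := by
    have := ((hasDerivAt_pow 2 (0 : ℝ)).div_const a).add
      ((((hasDerivAt_id (0 : ℝ)).const_sub 1).pow 2).div_const b)
    exact this.congr_deriv (by simp)
  have := hq.sqrt (by simp [hb.ne'])
  refine this.congr_deriv ?_
  simp only [Real.sqrt_inv, zero_pow two_ne_zero, zero_div, sub_zero, one_pow, zero_add, one_div]
  field_simp
  rw [Real.sq_sqrt hb.le]

section InnerProductSpace

variable {E : Type*} [NormedAddCommGroup E] [InnerProductSpace ℝ E]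

theorem HasDerivAt.norm_of_ne_zero {f : ℝ → E} {f' : E} {x : ℝ} (hf : HasDerivAt f f' x)
    (h0 : f x ≠ 0) : HasDerivAt (fun t => ‖f t‖) (⟪f x, f'⟫ / ‖f x‖) x := by
  have hpos : 0 < ‖f x‖ := norm_pos_iff.2 h0
  have := hf.norm_sq.sqrt (by positivity)
  simp only [Real.sqrt_sq (norm_nonneg _)] at this
  exact this.congr_deriv (by field_simp)

theorem hasDerivAt_norm_smul_add_one_sub_smul (x : E) {y : E} (hy : y ≠ 0) :
    HasDerivAt (fun β : ℝ => ‖β • x + (1 - β) • y‖) (⟪y, x - y⟫ / ‖y‖) 0 := by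
  have hline : HasDerivAt (fun β : ℝ => β • x + (1 - β) • y) (x - y) 0 := by
    have := ((hasDerivAt_id (0 : ℝ)).smul_const x).add
      (((hasDerivAt_id (0 : ℝ)).const_sub 1).smul_const y)
    exact this.congr_deriv (by simp [sub_eq_add_neg])
  simpa using hline.norm_of_ne_zero (by simpa using hy)

theorem hasDerivAt_sub_norm_div_sqrt_sq_div_add_one_sub_sq_div (x : E) {y : E} (hy : y ≠ 0)
    (R a : ℝ) {b : ℝ} (hb : 0 < b) :
    HasDerivAt (fun β : ℝ => (R - ‖β • x + (1 - β) • y‖) / √(β ^ 2 / a + (1 - β) ^ 2 / b))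
      (√b * (R - ‖y‖ - ⟪y, x - y⟫ / ‖y‖)) 0 := by
  have hden0 : √((0 : ℝ) ^ 2 / a + (1 - 0) ^ 2 / b) = (√b)⁻¹ := by simp
  have := ((hasDerivAt_norm_smul_add_one_sub_smul x hy).const_sub R).div
    (hasDerivAt_sqrt_sq_div_add_one_sub_sq_div a hb) (by rw [hden0]; positivity)
  refine this.congr_deriv ?_
  rw [hden0]
  simp only [zero_smul, sub_zero, one_smul, zero_add]
  field_simp
  ring

end InnerProductSpace

theorem stmt_11_general
    (d : ℕ)
    (Δna Δnb : EuclideanSpace ℝ (Fin d))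
    (r r' : ℝ)
    (ρta ρtb : ℝ) (hρtb : 0 < ρtb)
    (h : ℝ → ℝ)
    (hh : ∀ β : ℝ, h β = max 0
      (((r + r') - ‖β • Δna + (1 - β) • Δnb‖) /
        Real.sqrt (β ^ 2 / ρta + (1 - β) ^ 2 / ρtb)))
    (hΔnb : Δnb ≠ 0) (hlt : ‖Δnb‖ < r + r') :
    HasDerivWithinAt h
      (Real.sqrt ρtb * ((r + r') - ‖Δnb‖ - ⟪Δnb, Δna - Δnb⟫ / ‖Δnb‖))
      (Icc (0 : ℝ) 1) 0 ∧
    Real.sign (derivWithin h (Icc (0 : ℝ) 1) 0) =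
      Real.sign ((r + r') - ‖Δnb‖ - ⟪Δnb, Δna - Δnb⟫ / ‖Δnb‖) := by
  have hsb : 0 < √ρtb := Real.sqrt_pos.2 hρtb
  obtain rfl : h = _ := funext hh
  have hderiv := ((hasDerivAt_sub_norm_div_sqrt_sq_div_add_one_sub_sq_div Δna hΔnb (r + r') ρta
    hρtb).max_zero_of_pos (by simpa using mul_pos (sub_pos.2 hlt) hsb)).hasDerivWithinAt
    (s := Icc 0 1)
  refine ⟨hderiv, ?_⟩
  rw [hderiv.derivWithin (uniqueDiffOn_Icc one_pos 0 ⟨le_rfl, zero_le_one⟩),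
    Real.sign_mul_of_pos hsb]

/-- Right derivative of `h` at `α = 0` within `[0,1]`, and its sign
(the "easy case" test at `α = 0`). -/
theorem stmt_11
    (d : ℕ) (hd : 1 ≤ d)
    (Δna Δnb : EuclideanSpace ℝ (Fin d))
    (r r' : ℝ) (hr : 0 < r) (hr' : 0 < r')
    (ρta ρtb : ℝ) (hρta : 0 < ρta) (hρtb : 0 < ρtb)
    (h : ℝ → ℝ)
    (hh : ∀ β : ℝ, h β = max 0
      (((r + r') - ‖β • Δna + (1 - β) • Δnb‖) /
        Real.sqrt (β ^ 2 / ρta + (1 - β) ^ 2 / ρtb)))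
    (hΔnb : Δnb ≠ 0) (hlt : ‖Δnb‖ < r + r') :
    HasDerivWithinAt h
      (Real.sqrt ρtb * ((r + r') - ‖Δnb‖ - ⟪Δnb, Δna - Δnb⟫ / ‖Δnb‖))
      (Icc (0 : ℝ) 1) 0 ∧
    Real.sign (derivWithin h (Icc (0 : ℝ) 1) 0) =
      Real.sign ((r + r') - ‖Δnb‖ - ⟪Δnb, Δna - Δnb⟫ / ‖Δnb‖) :=
  stmt_11_general d Δna Δnb r r' ρta ρtb hρtb h hh hΔnb hlt
end

section
/- Let N ∈ ℝ^{m×d} for some d ≥ 1. Then the unique pair (X, v) with X ∈ ℝ^{m×d} and v ∈ ℝ^{1×d} satisfying the linear system ½DX + av = ½DN and aᵀX − (1/λ)v = 0 is given by v = (λ/(1 + 2λs)) aᵀN and X = N − (2λ/(1 + 2λs)) D⁻¹aaᵀN. -/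
/-!
Since `D` is invertible, the first equation solves for `X = N - 2 D⁻¹ a v`. Substituting this into
the second equation, the scalar `s = aᵀ D⁻¹ a` appears and the system collapses to
`((1 + 2λs) / λ) v = aᵀ N`, a scalar multiple of `v`, which is solved by dividing out the
nonzero factor; back-substitution then gives `X`.
-/

open Matrix

namespace Matrix

variable {n p : Type*} [Fintype n] [DecidableEq n]

theorem fin_one_mul_eq_smul {R : Type*} [Semiring R] (c : Matrix (Fin 1) (Fin 1) R)
    (w : Matrix (Fin 1) p R) : c * w = c 0 0 • w := by
  ext i j
  simp [mul_apply, Fin.fin_one_eq_zero i]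

theorem mul_add_eq_mul_iff {R : Type*} [CommRing R] {D : Matrix n n R} (hD : IsUnit D.det)
    (X N B : Matrix n p R) : D * X + B = D * N ↔ X = N - D⁻¹ * B := by
  constructor
  · intro h
    rw [← nonsing_inv_mul_cancel_left D X hD, eq_sub_of_add_eq h, Matrix.mul_sub,
      nonsing_inv_mul_cancel_left D N hD]
  · rintro rfl
    rw [Matrix.mul_sub, mul_nonsing_inv_cancel_left D B hD, sub_add_cancel]

end Matrix

section KKT

variable {K : Type*} [Field K] {n p : Type*} [Fintype n] [DecidableEq n]
  {D : Matrix n n K} (a : Matrix n (Fin 1) K)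

theorem kkt_stationarity_iff [NeZero (2 : K)] (hD : IsUnit D.det) (X N : Matrix n p K)
    (v : Matrix (Fin 1) p K) :
    (1 / 2 : K) • (D * X) + a * v = (1 / 2 : K) • (D * N) ↔
      X = N - (2 : K) • (D⁻¹ * (a * v)) := by
  have hdouble : (1 / 2 : K) • (D * X) + a * v = (1 / 2 : K) • (D * N) ↔
      D * X + (2 : K) • (a * v) = D * N := by
    rw [← smul_right_inj (two_ne_zero' K), smul_add, smul_smul, smul_smul, one_div,
      mul_inv_cancel₀ two_ne_zero, one_smul, one_smul]
  rw [hdouble, mul_add_eq_mul_iff hD, Matrix.mul_smul]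

theorem kkt_feasibility_iff {lam : K} (hlam : lam ≠ 0)
    (hden : 1 + 2 * lam * (aᵀ * D⁻¹ * a) 0 0 ≠ 0) (N : Matrix n p K) (v : Matrix (Fin 1) p K) :
    aᵀ * (N - (2 : K) • (D⁻¹ * (a * v))) - (1 / lam) • v = 0 ↔
      v = (lam / (1 + 2 * lam * (aᵀ * D⁻¹ * a) 0 0)) • (aᵀ * N) := by
  set s := (aᵀ * D⁻¹ * a) 0 0
  have hquad : aᵀ * (D⁻¹ * (a * v)) = s • v := by
    rw [← Matrix.mul_assoc, ← Matrix.mul_assoc, fin_one_mul_eq_smul]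
  have hcoef : 2 * s + 1 / lam = (1 + 2 * lam * s) / lam := by
    field_simp
    ring
  rw [Matrix.mul_sub, Matrix.mul_smul, hquad, sub_sub, sub_eq_zero, smul_smul, ← add_smul,
    hcoef, eq_comm, ← inv_div (1 + 2 * lam * s) lam, eq_inv_smul_iff₀ (div_ne_zero hden hlam)]

theorem kkt_system_iff [NeZero (2 : K)] (hD : IsUnit D.det) {lam : K} (hlam : lam ≠ 0)
    (hden : 1 + 2 * lam * (aᵀ * D⁻¹ * a) 0 0 ≠ 0) (N X : Matrix n p K) (v : Matrix (Fin 1) p K) :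
    ((1 / 2 : K) • (D * X) + a * v = (1 / 2 : K) • (D * N) ∧ aᵀ * X - (1 / lam) • v = 0) ↔
      (v = (lam / (1 + 2 * lam * (aᵀ * D⁻¹ * a) 0 0)) • (aᵀ * N) ∧
        X = N - (2 * lam / (1 + 2 * lam * (aᵀ * D⁻¹ * a) 0 0)) • (D⁻¹ * a * aᵀ * N)) := by
  set c := 1 + 2 * lam * (aᵀ * D⁻¹ * a) 0 0
  have hX : N - (2 : K) • (D⁻¹ * (a * ((lam / c) • (aᵀ * N)))) =
      N - (2 * lam / c) • (D⁻¹ * a * aᵀ * N) := by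
    simp only [Matrix.mul_smul, smul_smul, Matrix.mul_assoc, mul_div_assoc]
  rw [kkt_stationarity_iff a hD]
  constructor
  · rintro ⟨rfl, h⟩
    have hv := (kkt_feasibility_iff a hlam hden N v).1 h
    exact ⟨hv, by rw [hv, hX]⟩
  · rintro ⟨rfl, rfl⟩
    exact ⟨hX.symm, by rw [← hX]; exact (kkt_feasibility_iff a hlam hden N _).2 rfl⟩

end KKT

theorem stmt_16_general
    (m : ℕ)
    (dg : Fin m → ℝ) (hdg : ∀ i, 0 < dg i)
    (D : Matrix (Fin m) (Fin m) ℝ) (hD : D = Matrix.diagonal dg)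
    (a : Matrix (Fin m) (Fin 1) ℝ)
    (lam : ℝ) (hlam : lam ≠ 0)
    (s : ℝ) (hs : s = (aᵀ * D⁻¹ * a) 0 0)
    (hden : 1 + 2 * lam * s ≠ 0)
    (d : ℕ)
    (N : Matrix (Fin m) (Fin d) ℝ) :
    ∀ (X : Matrix (Fin m) (Fin d) ℝ) (v : Matrix (Fin 1) (Fin d) ℝ),
      ((1 / 2 : ℝ) • (D * X) + a * v = (1 / 2 : ℝ) • (D * N) ∧
        aᵀ * X - (1 / lam) • v = 0) ↔
      (v = (lam / (1 + 2 * lam * s)) • (aᵀ * N) ∧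
        X = N - (2 * lam / (1 + 2 * lam * s)) • (D⁻¹ * a * aᵀ * N)) := by
  subst hD hs
  have hdet : IsUnit (diagonal dg).det := by
    rw [det_diagonal, isUnit_iff_ne_zero]
    exact Finset.prod_ne_zero_iff.mpr fun i _ => (hdg i).ne'
  exact kkt_system_iff a hdet hlam hden N

/-- Unique solution of the KKT stationarity system of the single-constraint collision
proximal problem. -/
theorem stmt_16
    (m : ℕ) (hm : 1 ≤ m)
    (dg : Fin m → ℝ) (hdg : ∀ i, 0 < dg i)
    (D : Matrix (Fin m) (Fin m) ℝ) (hD : D = Matrix.diagonal dg)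
    (a : Matrix (Fin m) (Fin 1) ℝ)
    (lam : ℝ) (hlam : lam ≠ 0)
    (s : ℝ) (hs : s = (aᵀ * D⁻¹ * a) 0 0)
    (hden : 1 + 2 * lam * s ≠ 0)
    (d : ℕ) (hd : 1 ≤ d)
    (N : Matrix (Fin m) (Fin d) ℝ) :
    ∀ (X : Matrix (Fin m) (Fin d) ℝ) (v : Matrix (Fin 1) (Fin d) ℝ),
      ((1 / 2 : ℝ) • (D * X) + a * v = (1 / 2 : ℝ) • (D * N) ∧
        aᵀ * X - (1 / lam) • v = 0) ↔
      (v = (lam / (1 + 2 * lam * s)) • (aᵀ * N) ∧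
        X = N - (2 * lam / (1 + 2 * lam * s)) • (D⁻¹ * a * aᵀ * N)) :=
  stmt_16_general m dg hdg D hD a lam hlam s hs hden d N
end

section
/- Assume additionally a ≠ 0 (so s > 0), let N ∈ ℝ^{m×d}, set v = (λ/(1 + 2λs)) aᵀN ∈ ℝ^{1×d}, and let R > 0. If ‖v‖ = |λ|R (where ‖·‖ is the Euclidean norm of a row vector), then λ = (1/(2s))(−1 + ‖aᵀN‖/R) or λ = (1/(2s))(−1 − ‖aᵀN‖/R). -/
open Matrix

/-! Pulling the scalar out of the norm turns `‖v‖ = |λ| R` into `‖aᵀN‖ = |1 + 2λs| R`; the two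
signs of `1 + 2λs` give the two values of `λ`, and `s > 0` because `D⁻¹` is positive definite. -/

lemma Matrix.PosDef.transpose_mul_mul_apply_pos {n k : Type*} [Fintype n] {M : Matrix n n ℝ}
    (hM : M.PosDef) {a : Matrix n k ℝ} {j : k} (ha : (fun i => a i j) ≠ 0) :
    0 < (aᵀ * M * a) j j := by
  have hquad : (aᵀ * M * a) j j = (fun i => a i j) ⬝ᵥ M *ᵥ (fun i => a i j) := by
    simp only [mul_apply, transpose_apply, dotProduct, mulVec, Finset.sum_mul, Finset.mul_sum]
    rw [Finset.sum_comm]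
    exact Finset.sum_congr rfl fun _ _ => Finset.sum_congr rfl fun _ _ => by ring
  simpa [hquad] using hM.dotProduct_mulVec_pos ha

lemma sqrt_sum_sq_const_mul {ι : Type*} [Fintype ι] (c : ℝ) (x : ι → ℝ) :
    √(∑ j, (c * x j) ^ 2) = |c| * √(∑ j, x j ^ 2) := by
  simp_rw [mul_pow, ← Finset.mul_sum]
  rw [Real.sqrt_mul (sq_nonneg c), Real.sqrt_sq_eq_abs]

lemma eq_or_eq_of_abs_div_mul_eq {lam s W R : ℝ} (hlam : lam ≠ 0) (hs : s ≠ 0)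
    (hden : 1 + 2 * lam * s ≠ 0) (hR : R ≠ 0)
    (h : |lam / (1 + 2 * lam * s)| * W = |lam| * R) :
    lam = 1 / (2 * s) * (-1 + W / R) ∨ lam = 1 / (2 * s) * (-1 - W / R) := by
  have hW : W = |1 + 2 * lam * s| * R := by
    rw [abs_div, div_mul_eq_mul_div, div_eq_iff (abs_ne_zero.mpr hden)] at h
    exact mul_left_cancel₀ (abs_ne_zero.mpr hlam) (by linarith)
  rcases abs_choice (1 + 2 * lam * s) with habs | habs <;> rw [habs] at hW
  · left
    field_simp
    linarith
  · right
    field_simp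
    linarith

theorem stmt_18_general
    (m : ℕ)
    (dg : Fin m → ℝ) (hdg : ∀ i, 0 < dg i)
    (D : Matrix (Fin m) (Fin m) ℝ) (hD : D = Matrix.diagonal dg)
    (a : Matrix (Fin m) (Fin 1) ℝ) (ha : a ≠ 0)
    (lam : ℝ) (hlam : lam ≠ 0)
    (s : ℝ) (hs : s = (aᵀ * D⁻¹ * a) 0 0)
    (hden : 1 + 2 * lam * s ≠ 0)
    (d : ℕ)
    (N : Matrix (Fin m) (Fin d) ℝ)
    (v : Matrix (Fin 1) (Fin d) ℝ)
    (hv : v = (lam / (1 + 2 * lam * s)) • (aᵀ * N))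
    (R : ℝ) (hR : 0 < R)
    (hnorm : Real.sqrt (∑ j : Fin d, v 0 j ^ 2) = |lam| * R) :
    lam = 1 / (2 * s) * (-1 + Real.sqrt (∑ j : Fin d, (aᵀ * N) 0 j ^ 2) / R) ∨
      lam = 1 / (2 * s) * (-1 - Real.sqrt (∑ j : Fin d, (aᵀ * N) 0 j ^ 2) / R) := by
  have hcol : (fun i => a i 0) ≠ 0 := fun h =>
    ha (Matrix.ext fun i j => by rw [Subsingleton.elim j 0]; exact congrFun h i)
  have hs_pos : 0 < s :=
    hs ▸ hD ▸ (PosDef.diagonal hdg).inv.transpose_mul_mul_apply_pos hcol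
  rw [hv] at hnorm
  simp only [Matrix.smul_apply, smul_eq_mul, sqrt_sum_sq_const_mul] at hnorm
  exact eq_or_eq_of_abs_div_mul_eq hlam hs_pos.ne' hden hR.ne' hnorm

/-- The possible Lagrange multipliers of the single-constraint collision proximal
problem, determined by the active-constraint condition `‖v‖ = |λ| R`. -/
theorem stmt_18
    (m : ℕ) (hm : 1 ≤ m)
    (dg : Fin m → ℝ) (hdg : ∀ i, 0 < dg i)
    (D : Matrix (Fin m) (Fin m) ℝ) (hD : D = Matrix.diagonal dg)
    (a : Matrix (Fin m) (Fin 1) ℝ) (ha : a ≠ 0)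
    (lam : ℝ) (hlam : lam ≠ 0)
    (s : ℝ) (hs : s = (aᵀ * D⁻¹ * a) 0 0)
    (hden : 1 + 2 * lam * s ≠ 0)
    (d : ℕ) (hd : 1 ≤ d)
    (N : Matrix (Fin m) (Fin d) ℝ)
    (v : Matrix (Fin 1) (Fin d) ℝ)
    (hv : v = (lam / (1 + 2 * lam * s)) • (aᵀ * N))
    (R : ℝ) (hR : 0 < R)
    (hnorm : Real.sqrt (∑ j : Fin d, v 0 j ^ 2) = |lam| * R) :
    lam = 1 / (2 * s) * (-1 + Real.sqrt (∑ j : Fin d, (aᵀ * N) 0 j ^ 2) / R) ∨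
      lam = 1 / (2 * s) * (-1 - Real.sqrt (∑ j : Fin d, (aᵀ * N) 0 j ^ 2) / R) :=
  stmt_18_general m dg hdg D hD a ha lam hlam s hs hden d N v hv R hR hnorm
end
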